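/- arXiv:2108.05338 — 5 statements merged into one kernel-verified Lean document; each statement's English description precedes it below -/
import Mathlib

section
/- Suppose S_0 is distributed according to d_μ, so that the chain is stationary and Pr(S_t = s) = d_μ(s) > 0 for all t and s. Then for every t ≥ n and every state s, the conditional expectation of the truncated followon trace satisfies E[F_{t,n} | S_t = s] = m_n(s), where m_n(s) = Σ_{j=0}^n γ^j Σ_{s'} d_μ(s') P_π^j(s', s) i(s') / d_μ(s). -/
/-!
Condition on `S_t = s` and sum over the finitely many paths of length `t`: a path has
probability `d(s₀) ∏ μ p`, and in the `j`-th summand of `F_{t,n}` the ratios `π/μ` turn the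
last `j` factors `μ p` into `π p`. Propagating the weights forward, the first `t - j` steps
preserve `d` (stationarity), the interest turns it into `d ⊙ i` at time `t - j`, and the last
`j` steps give `(d ⊙ i)ᵀ P_π^j`. Evaluating at `s` and dividing by `Pr(S_t = s) = d(s)` gives
`m_n(s)`.
-/

open Matrix Finset MeasureTheory

noncomputable section

theorem Finset.prod_Ico_eq_prod_fin {M : Type*} [CommMonoid M] (f : ℕ → M) (m n : ℕ) :
    ∏ k ∈ Ico m n, f k = ∏ k : Fin n, if m ≤ (k : ℕ) then f k else 1 := by
  rw [Fin.prod_univ_eq_prod_range (fun k => if m ≤ k then f k else 1), ← prod_filter]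
  congr 1
  ext k
  simp only [mem_Ico, mem_filter, mem_range]
  omega

theorem Fin.prod_univ_ite_val_eq {M : Type*} [CommMonoid M] (f : ℕ → M) {m n : ℕ}
    (h : m < n) :
    ∏ k : Fin n, (if (k : ℕ) = m then f k else 1) = f m := by
  rw [Fin.prod_univ_eq_prod_range (fun k => if k = m then f k else 1), prod_ite_eq',
    if_pos (mem_range.mpr h)]

section FiniteLaw

variable {Ω β : Type*} [MeasurableSpace Ω] [Fintype β] [MeasurableSpace β]
  [MeasurableSingletonClass β] {P : Measure Ω} [IsFiniteMeasure P] {X : Ω → β}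

theorem integrable_comp_of_fintype (hX : Measurable X) (G : β → ℝ) :
    Integrable (fun ω => G (X ω)) P :=
  (integrable_map_measure (measurable_of_finite G).aestronglyMeasurable hX.aemeasurable).mp
    .of_finite

theorem setIntegral_comp_eq_sum (hX : Measurable X) {q : β → ℝ} (hq : ∀ x, 0 ≤ q x)
    (hlaw : ∀ x, P (X ⁻¹' {x}) = ENNReal.ofReal (q x)) (E : Set β) (G : β → ℝ) :
    ∫ ω in X ⁻¹' E, G (X ω) ∂P = ∑ x, q x * E.indicator G x := by
  rw [← setIntegral_map E.toFinite.measurableSet (measurable_of_finite G).aestronglyMeasurable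
    hX.aemeasurable, ← integral_indicator E.toFinite.measurableSet, integral_fintype .of_finite]
  refine sum_congr rfl fun x _ => ?_
  rw [measureReal_def, Measure.map_apply hX (measurableSet_singleton x), hlaw,
    ENNReal.toReal_ofReal (hq x), smul_eq_mul]

end FiniteLaw

section ForwardWeights

variable {S A : Type*} [Fintype S] [Fintype A]

def kernelMatrix (w : S → A → S → ℝ) : Matrix S S ℝ :=
  Matrix.of fun s s' => ∑ a, w s a s'

def forwardWeights (d : S → ℝ) (w : ℕ → S → A → S → ℝ) (g : ℕ → S → ℝ) :
    ℕ → S → ℝ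
  | 0 => d * g 0
  | m + 1 => (forwardWeights d w g m ᵥ* kernelMatrix (w m)) * g (m + 1)

theorem sum_paths_eq_sum_forwardWeights (d : S → ℝ) (w : ℕ → S → A → S → ℝ)
    (g : ℕ → S → ℝ) (T : ℕ) (f : S → ℝ) :
    ∑ σ : Fin (T + 1) → S, ∑ α : Fin T → A,
      d (σ 0) * (∏ k : Fin T, w k (σ k.castSucc) (α k) (σ k.succ)) *
        (∏ k : Fin (T + 1), g k (σ k)) * f (σ (Fin.last T)) =
      ∑ s, forwardWeights d w g T s * f s := by
  induction T generalizing f with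
  | zero =>
    rw [← (Equiv.funUnique (Fin 1) S).symm.sum_comp]
    simp [forwardWeights, mul_assoc]
  | succ T ih =>
    rw [← (Fin.snocEquiv fun _ => S).sum_comp, Fintype.sum_prod_type]
    simp only [forwardWeights, Pi.mul_apply, vecMul, dotProduct, kernelMatrix, of_apply]
    refine sum_congr rfl fun x _ => ?_
    have hx : (∑ s, forwardWeights d w g T s * ∑ a, w T s a x) * g (T + 1) x * f x =
        ∑ s, forwardWeights d w g T s * ∑ a, w T s a x * g (T + 1) x * f x := by
      simp only [sum_mul, mul_sum, mul_assoc]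
    rw [hx, ← ih]
    refine sum_congr rfl fun σ _ => ?_
    rw [← (Fin.snocEquiv fun _ => A).sum_comp, Fintype.sum_prod_type, sum_comm]
    simp only [mul_sum]
    refine sum_congr rfl fun α _ => sum_congr rfl fun a _ => ?_
    simp only [Fin.snocEquiv_apply, Fin.prod_univ_castSucc, Fin.snoc_castSucc, Fin.snoc_last,
      Fin.succ_castSucc, Fin.succ_last, Fin.val_castSucc, Fin.val_last]
    rw [← Fin.castSucc_zero, Fin.snoc_castSucc]
    ring

variable {d : S → ℝ} {w : ℕ → S → A → S → ℝ} {g : ℕ → S → ℝ} {u : S → A → S → ℝ}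

theorem forwardWeights_eq_of_stationary (hd : d ᵥ* kernelMatrix u = d) {m : ℕ}
    (hw : ∀ k < m, w k = u) (hg : ∀ k < m, g k = 1) :
    forwardWeights d w g m = d * g m := by
  induction m with
  | zero => rfl
  | succ m ih =>
    rw [forwardWeights, ih (fun k hk => hw k (by omega)) (fun k hk => hg k (by omega)),
      hg m (by omega), mul_one, hw m (by omega), hd]

theorem forwardWeights_add [DecidableEq S] {m r : ℕ}
    (hw : ∀ k, m ≤ k → k < m + r → w k = u) (hg : ∀ k, m < k → k ≤ m + r → g k = 1) :
    forwardWeights d w g (m + r) = forwardWeights d w g m ᵥ* kernelMatrix u ^ r := by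
  induction r with
  | zero => simp
  | succ r ih =>
    rw [← add_assoc, forwardWeights, ih (fun k hk hk' => hw k hk (by omega))
      (fun k hk hk' => hg k hk (by omega)), hg (m + r + 1) (by omega) (by omega), mul_one,
      hw _ (by omega) (by omega), vecMul_vecMul, pow_succ]

theorem sum_paths_stationary {w : S → A → S → ℝ} (hd : d ᵥ* kernelMatrix w = d) (T : ℕ)
    (f : S → ℝ) :
    ∑ σ : Fin (T + 1) → S, ∑ α : Fin T → A,
      d (σ 0) * (∏ k : Fin T, w (σ k.castSucc) (α k) (σ k.succ)) * f (σ (Fin.last T)) =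
      ∑ s, d s * f s := by
  have h := sum_paths_eq_sum_forwardWeights d (fun _ => w) (fun _ => 1) T f
  simp only [Pi.one_apply, prod_const_one, mul_one] at h
  rw [h, forwardWeights_eq_of_stationary hd (fun _ _ => rfl) (fun _ _ => rfl), mul_one]

end ForwardWeights

section ImportanceSampling

variable {S A : Type*} [Fintype S] [Fintype A]

/-- `(∏_{k=m}^{t-1} ρ_k) i(S_m)`, the summand `j = t - m` of the truncated followon trace,
read off a path of length `t`. -/
def followonTerm (π μ : S → A → ℝ) (i : S → ℝ) {t : ℕ} (m : ℕ)
    (x : (Fin (t + 1) → S) × (Fin t → A)) : ℝ :=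
  (∏ k : Fin t,
      if m ≤ (k : ℕ) then π (x.1 k.castSucc) (x.2 k) / μ (x.1 k.castSucc) (x.2 k) else 1) *
    ∏ k : Fin (t + 1), if (k : ℕ) = m then i (x.1 k) else 1

theorem sum_paths_followonTerm [DecidableEq S] {p : S → A → S → ℝ} {μ : S → A → ℝ}
    {d : S → ℝ} (hμ : ∀ s a, μ s a ≠ 0)
    (hd : d ᵥ* kernelMatrix (fun s a s' => μ s a * p s a s') = d)
    (π : S → A → ℝ) (i f : S → ℝ) {m T : ℕ} (hmT : m ≤ T) :
    ∑ σ : Fin (T + 1) → S, ∑ α : Fin T → A,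
      d (σ 0) * (∏ k : Fin T, μ (σ k.castSucc) (α k) * p (σ k.castSucc) (α k) (σ k.succ)) *
        followonTerm π μ i m (σ, α) * f (σ (Fin.last T)) =
      ∑ s, ((d * i) ᵥ* kernelMatrix (fun s a s' => π s a * p s a s') ^ (T - m)) s * f s := by
  -- the ratios turn the behaviour kernel into the target kernel from time `m` on
  let w : ℕ → S → A → S → ℝ := fun k s a s' =>
    if m ≤ k then π s a * p s a s' else μ s a * p s a s'
  let g : ℕ → S → ℝ := fun k s => if k = m then i s else 1
  have hpath : ∀ (σ : Fin (T + 1) → S) (α : Fin T → A),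
      (∏ k : Fin T, μ (σ k.castSucc) (α k) * p (σ k.castSucc) (α k) (σ k.succ)) *
        (∏ k : Fin T,
          if m ≤ (k : ℕ) then π (σ k.castSucc) (α k) / μ (σ k.castSucc) (α k) else 1) =
      ∏ k : Fin T, w k (σ k.castSucc) (α k) (σ k.succ) := by
    intro σ α
    rw [← prod_mul_distrib]
    refine prod_congr rfl fun k _ => ?_
    have hμk := hμ (σ k.castSucc) (α k)
    simp only [w]
    split_ifs <;> field_simp
  have hm : forwardWeights d w g m = d * i := by
    rw [forwardWeights_eq_of_stationary (w := w) (g := g) hd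
      (fun k hk => funext₃ fun s a s' => if_neg (by omega))
      (fun k hk => funext fun s => if_neg (by omega))]
    simp [g]
  obtain ⟨r, rfl⟩ := Nat.exists_eq_add_of_le hmT
  have hr : forwardWeights d w g (m + r) =
      (d * i) ᵥ* kernelMatrix (fun s a s' => π s a * p s a s') ^ r := by
    rw [forwardWeights_add (w := w) (g := g)
      (fun k hk _ => funext₃ fun s a s' => if_pos hk)
      (fun k hk _ => funext fun s => if_neg (by omega)), hm]
  rw [Nat.add_sub_cancel_left, ← hr, ← sum_paths_eq_sum_forwardWeights]
  refine sum_congr rfl fun σ _ => sum_congr rfl fun α _ => ?_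
  dsimp only [followonTerm]
  rw [← hpath]
  simp only [g]
  ring

end ImportanceSampling

section Trajectory

variable {Ω S A : Type*} {St : ℕ → Ω → S} {At : ℕ → Ω → A}

def trajectory (St : ℕ → Ω → S) (At : ℕ → Ω → A) (t : ℕ) (ω : Ω) :
    (Fin (t + 1) → S) × (Fin t → A) :=
  (fun k => St k ω, fun k => At k ω)

theorem followonTerm_trajectory [Fintype S] [Fintype A] (π μ : S → A → ℝ) (i : S → ℝ)
    {m t : ℕ} (hmt : m ≤ t) (ω : Ω) :
    followonTerm π μ i m (trajectory St At t ω) =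
      (∏ k ∈ Ico m t, π (St k ω) (At k ω) / μ (St k ω) (At k ω)) * i (St m ω) := by
  rw [prod_Ico_eq_prod_fin,
    ← Fin.prod_univ_ite_val_eq (fun k => i (St k ω)) (by omega : m < t + 1)]
  rfl

variable [MeasurableSpace Ω] [MeasurableSpace S] [MeasurableSpace A]

theorem measurable_trajectory (hSt : ∀ t, Measurable (St t)) (hAt : ∀ t, Measurable (At t))
    (t : ℕ) : Measurable (trajectory St At t) :=
  (measurable_pi_lambda _ fun k : Fin (t + 1) => hSt k).prodMk
    (measurable_pi_lambda _ fun k : Fin t => hAt k)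

theorem setIntegral_trajectory_eq_sum_paths [Fintype S] [DecidableEq S] [Fintype A]
    [MeasurableSingletonClass S] [MeasurableSingletonClass A] {P : Measure Ω}
    [IsFiniteMeasure P] (hSt : ∀ t, Measurable (St t)) (hAt : ∀ t, Measurable (At t))
    {d : S → ℝ} {w : S → A → S → ℝ} (hd : ∀ s, 0 ≤ d s) (hw : ∀ s a s', 0 ≤ w s a s') {t : ℕ}
    (hlaw : ∀ (σ : Fin (t + 1) → S) (α : Fin t → A),
      P {ω | (∀ k : Fin (t + 1), St k ω = σ k) ∧ ∀ k : Fin t, At k ω = α k} =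
        ENNReal.ofReal (d (σ 0) * ∏ k : Fin t, w (σ k.castSucc) (α k) (σ k.succ)))
    (s : S) (G : (Fin (t + 1) → S) × (Fin t → A) → ℝ) :
    ∫ ω in {ω | St t ω = s}, G (trajectory St At t ω) ∂P =
      ∑ σ : Fin (t + 1) → S, ∑ α : Fin t → A,
        d (σ 0) * (∏ k : Fin t, w (σ k.castSucc) (α k) (σ k.succ)) * G (σ, α) *
          if σ (Fin.last t) = s then 1 else 0 := by
  rw [show {ω | St t ω = s} = trajectory St At t ⁻¹' {x | x.1 (Fin.last t) = s} from rfl,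
    setIntegral_comp_eq_sum (measurable_trajectory hSt hAt t)
      (fun x => mul_nonneg (hd _) (prod_nonneg fun k _ => hw _ _ _))
      (fun x => by
        rw [← hlaw x.1 x.2]; congr 1; ext ω; simp [trajectory, Prod.ext_iff, funext_iff]),
    Fintype.sum_prod_type]
  refine sum_congr rfl fun σ _ => sum_congr rfl fun α _ => ?_
  simp [Set.indicator_apply]

theorem measureReal_state_eq_of_stationary [Fintype S] [DecidableEq S] [Fintype A]
    [MeasurableSingletonClass S] [MeasurableSingletonClass A] {P : Measure Ω}
    [IsFiniteMeasure P] (hSt : ∀ t, Measurable (St t)) (hAt : ∀ t, Measurable (At t))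
    {d : S → ℝ} {w : S → A → S → ℝ} (hd : ∀ s, 0 ≤ d s) (hw : ∀ s a s', 0 ≤ w s a s') {t : ℕ}
    (hlaw : ∀ (σ : Fin (t + 1) → S) (α : Fin t → A),
      P {ω | (∀ k : Fin (t + 1), St k ω = σ k) ∧ ∀ k : Fin t, At k ω = α k} =
        ENNReal.ofReal (d (σ 0) * ∏ k : Fin t, w (σ k.castSucc) (α k) (σ k.succ)))
    (hstat : d ᵥ* kernelMatrix w = d) (s : S) :
    P.real {ω | St t ω = s} = d s := by
  have h := setIntegral_trajectory_eq_sum_paths hSt hAt hd hw hlaw s fun _ => 1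
  simp only [setIntegral_const, smul_eq_mul, mul_one] at h
  rw [h]
  exact (sum_paths_stationary hstat t fun e => if e = s then 1 else 0).trans (by simp)

end Trajectory

theorem truncated_trace_conditional_expectation_general
    {S A : Type} [Fintype S] [DecidableEq S] [Fintype A]
    [MeasurableSpace S] [MeasurableSingletonClass S]
    [MeasurableSpace A] [MeasurableSingletonClass A]
    (p : S → A → S → ℝ) (hp0 : ∀ s a s', 0 ≤ p s a s')
    (μpol : S → A → ℝ) (hμpos : ∀ s a, 0 < μpol s a)
    (πpol : S → A → ℝ)
    (d : S → ℝ) (hd : ∀ s, 0 < d s)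
    (hdinv : ∀ s', ∑ s, d s * (∑ a, μpol s a * p s a s') = d s')
    (γ : ℝ)
    (i : S → ℝ)
    {Ω : Type} [MeasurableSpace Ω] (ℙ : Measure Ω) [IsProbabilityMeasure ℙ]
    (St : ℕ → Ω → S) (At : ℕ → Ω → A)
    (hSt : ∀ t, Measurable (St t)) (hAt : ∀ t, Measurable (At t))
    -- the joint law of the trajectory: `S_0 ∼ d_μ`, `A_k ∼ μ(·|S_k)`, `S_{k+1} ∼ p(·|S_k,A_k)`
    (hjoint : ∀ (T : ℕ) (σ : Fin (T + 1) → S) (α : Fin T → A),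
      ℙ {ω | (∀ k : Fin (T + 1), St (k : ℕ) ω = σ k) ∧ (∀ k : Fin T, At (k : ℕ) ω = α k)} =
        ENNReal.ofReal (d (σ 0) *
          ∏ k : Fin T, (μpol (σ k.castSucc) (α k) * p (σ k.castSucc) (α k) (σ k.succ))))
    (n : ℕ) :
    ∀ t : ℕ, n ≤ t → ∀ s : S,
      (∫ ω in {ω | St t ω = s},
          (∑ j ∈ Finset.range (n + 1),
            γ ^ j * (∏ k ∈ Finset.Ico (t - j) t,
              πpol (St k ω) (At k ω) / μpol (St k ω) (At k ω)) * i (St (t - j) ω)) ∂ℙ) /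
        (ℙ {ω | St t ω = s}).toReal =
      ∑ j ∈ Finset.range (n + 1),
        γ ^ j * ((∑ s', d s' * ((Matrix.of fun s₁ s₂ => ∑ a, πpol s₁ a * p s₁ a s₂) ^ j)
            s' s * i s') / d s) := by
  intro t ht s
  have hstat : d ᵥ* kernelMatrix (fun s a s' => μpol s a * p s a s') = d :=
    funext fun s' => by simpa [vecMul, dotProduct, kernelMatrix, mul_sum] using hdinv s'
  have hd0 : ∀ s, 0 ≤ d s := fun s => (hd s).le
  have hw : ∀ s a s', 0 ≤ μpol s a * p s a s' := fun s a s' =>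
    mul_nonneg (hμpos s a).le (hp0 s a s')
  have hterm : ∀ j ≤ t, ∫ ω in {ω | St t ω = s},
      followonTerm πpol μpol i (t - j) (trajectory St At t ω) ∂ℙ =
        ((d * i) ᵥ* kernelMatrix (fun s a s' => πpol s a * p s a s') ^ j) s := fun j hj => by
    rw [setIntegral_trajectory_eq_sum_paths hSt hAt hd0 hw (hjoint t)]
    exact (sum_paths_followonTerm (fun s a => (hμpos s a).ne') hstat πpol i
      (fun e => if e = s then 1 else 0) (Nat.sub_le t j)).trans
      (by rw [Nat.sub_sub_self hj]; simp)
  have htrace : ∀ ω, ∑ j ∈ range (n + 1), γ ^ j * (∏ k ∈ Ico (t - j) t,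
      πpol (St k ω) (At k ω) / μpol (St k ω) (At k ω)) * i (St (t - j) ω) =
      ∑ j ∈ range (n + 1), γ ^ j * followonTerm πpol μpol i (t - j) (trajectory St At t ω) :=
    fun ω => sum_congr rfl fun j _ => by
      rw [followonTerm_trajectory _ _ _ (Nat.sub_le t j), mul_assoc]
  rw [integral_congr_ae (.of_forall htrace), integral_finsetSum _ fun j _ =>
    (integrable_comp_of_fintype (measurable_trajectory hSt hAt t) _).const_mul _, ← measureReal_def,
    measureReal_state_eq_of_stationary hSt hAt hd0 hw (hjoint t) hstat, sum_div]
  refine sum_congr rfl fun j hj => ?_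
  rw [integral_const_mul, mul_div_assoc, hterm j (by simp at hj; omega)]
  simp only [vecMul, dotProduct, kernelMatrix, Pi.mul_apply]
  congr 2
  exact sum_congr rfl fun s' _ => by ring

/-- in the stationary regime (`S_0 ∼ d_μ`, `d_μ` invariant), for every
`t ≥ n` and every state `s` with the truncated followon trace
`F_{t,n} = Σ_{j=0}^n γ^j (Π_{k=t−j}^{t−1} ρ_k) i(S_{t−j})`,
`E[F_{t,n} ∣ S_t = s] = m_n(s) = Σ_{j=0}^n γ^j Σ_{s'} d_μ(s') P_π^j(s',s) i(s') / d_μ(s)`. -/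
theorem truncated_trace_conditional_expectation
    {S A : Type} [Fintype S] [DecidableEq S] [Fintype A] [DecidableEq A]
    [MeasurableSpace S] [MeasurableSingletonClass S]
    [MeasurableSpace A] [MeasurableSingletonClass A]
    (p : S → A → S → ℝ) (hp0 : ∀ s a s', 0 ≤ p s a s') (hp1 : ∀ s a, ∑ s', p s a s' = 1)
    (μpol : S → A → ℝ) (hμpos : ∀ s a, 0 < μpol s a) (hμ1 : ∀ s, ∑ a, μpol s a = 1)
    (πpol : S → A → ℝ) (hπ0 : ∀ s a, 0 ≤ πpol s a) (hπ1 : ∀ s, ∑ a, πpol s a = 1)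
    (d : S → ℝ) (hd : ∀ s, 0 < d s) (hdsum : ∑ s, d s = 1)
    (hdinv : ∀ s', ∑ s, d s * (∑ a, μpol s a * p s a s') = d s')
    (γ : ℝ) (hγ0 : 0 ≤ γ) (hγ1 : γ < 1)
    (i : S → ℝ) (hi : ∀ s, 0 < i s)
    {Ω : Type} [MeasurableSpace Ω] (ℙ : Measure Ω) [IsProbabilityMeasure ℙ]
    (St : ℕ → Ω → S) (At : ℕ → Ω → A)
    (hSt : ∀ t, Measurable (St t)) (hAt : ∀ t, Measurable (At t))
    -- the joint law of the trajectory: `S_0 ∼ d_μ`, `A_k ∼ μ(·|S_k)`, `S_{k+1} ∼ p(·|S_k,A_k)`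
    (hjoint : ∀ (T : ℕ) (σ : Fin (T + 1) → S) (α : Fin T → A),
      ℙ {ω | (∀ k : Fin (T + 1), St (k : ℕ) ω = σ k) ∧ (∀ k : Fin T, At (k : ℕ) ω = α k)} =
        ENNReal.ofReal (d (σ 0) *
          ∏ k : Fin T, (μpol (σ k.castSucc) (α k) * p (σ k.castSucc) (α k) (σ k.succ))))
    (n : ℕ) :
    ∀ t : ℕ, n ≤ t → ∀ s : S,
      (∫ ω in {ω | St t ω = s},
          (∑ j ∈ Finset.range (n + 1),
            γ ^ j * (∏ k ∈ Finset.Ico (t - j) t,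
              πpol (St k ω) (At k ω) / μpol (St k ω) (At k ω)) * i (St (t - j) ω)) ∂ℙ) /
        (ℙ {ω | St t ω = s}).toReal =
      ∑ j ∈ Finset.range (n + 1),
        γ ^ j * ((∑ s', d s' * ((Matrix.of fun s₁ s₂ => ∑ a, πpol s₁ a * p s₁ a s₂) ^ j)
            s' s * i s') / d s) :=
  truncated_trace_conditional_expectation_general p hp0 μpol hμpos πpol d hd hdinv γ i ℙ St At hSt
    hAt hjoint n

end
end

section
/- For every n ∈ ℕ, ‖m_n − m‖₁ ≤ γ^{n+1} (d_{μ,max}/d_{μ,min}) ‖m‖₁ and ‖f_n − f‖_∞ ≤ γ^{n+1} (d_{μ,max}²/d_{μ,min}) ‖m‖₁, where d_{μ,max} := max_s d_μ(s) and d_{μ,min} := min_s d_μ(s). -/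
/-! With `f := D m = (1 - γPᵀ)⁻¹ D i`, the weighted truncation `f_n = D m_n` is the partial
Neumann sum `∑_{j ≤ n} (γPᵀ)^j D i = (1 - (γPᵀ)^{n+1}) f`, so `f_n - f = -γ^{n+1} (f P^{n+1})`.
Since `P^{n+1}` is row-stochastic, the row vector `f P^{n+1}` has ℓ1 norm, hence every entry, at
most `‖f‖₁ ≤ d_max ‖m‖₁`; dividing by `D` costs the factor `1 / d_min`. -/

open Matrix Finset

noncomputable section

/-- The truncated emphasis `m_n := Σ_{j=0}^n γ^j D_μ⁻¹ (P_π^⊤)^j D_μ i`. -/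
def truncEmph {S : Type} [Fintype S] [DecidableEq S]
    (γ : ℝ) (P : Matrix S S ℝ) (d i : S → ℝ) (n : ℕ) : S → ℝ :=
  fun s => ∑ j ∈ Finset.range (n + 1),
    γ ^ j * ((Matrix.diagonal fun s => (d s)⁻¹) * (Pᵀ) ^ j * Matrix.diagonal d).mulVec i s

/-- The emphasis `m := D_μ⁻¹ (I − γ P_π^⊤)⁻¹ D_μ i`. -/
def emph {S : Type} [Fintype S] [DecidableEq S]
    (γ : ℝ) (P : Matrix S S ℝ) (d i : S → ℝ) : S → ℝ :=
  ((Matrix.diagonal fun s => (d s)⁻¹) * (1 - γ • Pᵀ)⁻¹ * Matrix.diagonal d).mulVec i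

section
variable {n : Type*} [Fintype n] [DecidableEq n]

attribute [local instance] Matrix.linftyOpNormedRing Matrix.linftyOpNormedAlgebra

theorem Matrix.linfty_opNorm_le_one_of_mem_rowStochastic {M : Matrix n n ℝ}
    (hM : M ∈ rowStochastic ℝ n) : ‖M‖ ≤ 1 := by
  rw [linfty_opNorm_def, ← NNReal.coe_one, NNReal.coe_le_coe]
  refine Finset.sup_le fun i _ => le_of_eq ?_
  rw [← NNReal.coe_inj, NNReal.coe_sum]
  simpa [abs_of_nonneg (nonneg_of_mem_rowStochastic hM)] using sum_row_of_mem_rowStochastic hM i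

theorem Matrix.isUnit_one_sub_smul_of_mem_rowStochastic {M : Matrix n n ℝ}
    (hM : M ∈ rowStochastic ℝ n) {γ : ℝ} (hγ : |γ| < 1) : IsUnit (1 - γ • M) := by
  refine isUnit_one_sub_of_norm_lt_one ?_
  calc ‖γ • M‖ ≤ ‖γ‖ * ‖M‖ := norm_smul_le γ M
    _ ≤ |γ| * 1 := by
      rw [Real.norm_eq_abs]
      exact mul_le_mul_of_nonneg_left (linfty_opNorm_le_one_of_mem_rowStochastic hM)
        (abs_nonneg γ)
    _ < 1 := by rwa [mul_one]

theorem Matrix.sum_abs_vecMul_le_of_mem_rowStochastic {M : Matrix n n ℝ}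
    (hM : M ∈ rowStochastic ℝ n) (v : n → ℝ) :
    ∑ j, |(v ᵥ* M) j| ≤ ∑ i, |v i| := by
  calc ∑ j, |(v ᵥ* M) j| ≤ ∑ j, ∑ i, |v i| * M i j := by
        refine sum_le_sum fun j _ => (abs_sum_le_sum_abs _ _).trans_eq ?_
        simp [abs_mul, abs_of_nonneg (nonneg_of_mem_rowStochastic hM)]
    _ = ∑ i, |v i| := by
        rw [sum_comm]
        simp [← mul_sum, sum_row_of_mem_rowStochastic hM]

theorem Matrix.abs_vecMul_le_of_mem_rowStochastic {M : Matrix n n ℝ}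
    (hM : M ∈ rowStochastic ℝ n) (v : n → ℝ) (j : n) :
    |(v ᵥ* M) j| ≤ ∑ i, |v i| :=
  (single_le_sum (f := fun j => |(v ᵥ* M) j|) (fun _ _ => abs_nonneg _) (mem_univ j)).trans
    (sum_abs_vecMul_le_of_mem_rowStochastic hM v)

theorem Matrix.geom_sum_eq_one_sub_pow_mul_inv {R : Type*} [CommRing R] {A : Matrix n n R}
    (hA : IsUnit (1 - A)) (k : ℕ) :
    ∑ j ∈ range k, A ^ j = (1 - A ^ k) * (1 - A)⁻¹ := by
  rw [← geom_sum_mul_neg, mul_nonsing_inv_cancel_right _ _ ((isUnit_iff_isUnit_det _).mp hA)]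

end

section Emphasis
variable {S : Type} [Fintype S] [DecidableEq S] {γ : ℝ} {P : Matrix S S ℝ} {d : S → ℝ}

theorem diagonal_mul_diagonal_inv_mul_mul (hd : ∀ s, d s ≠ 0) (X : Matrix S S ℝ) :
    diagonal d * (diagonal (fun s => (d s)⁻¹) * X * diagonal d) = X * diagonal d := by
  rw [← mul_assoc, ← mul_assoc, diagonal_mul_diagonal]
  simp [mul_inv_cancel₀ (hd _)]

theorem diagonal_mulVec_truncEmph (hd : ∀ s, d s ≠ 0) (i : S → ℝ) (n : ℕ) :
    diagonal d *ᵥ truncEmph γ P d i n =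
      (∑ j ∈ range (n + 1), (γ • Pᵀ) ^ j) *ᵥ (diagonal d *ᵥ i) := by
  have hsum : truncEmph γ P d i n =
      (∑ j ∈ range (n + 1), diagonal (fun s => (d s)⁻¹) * (γ • Pᵀ) ^ j * diagonal d) *ᵥ i := by
    ext s
    rw [truncEmph]
    simp only [sum_mulVec, smul_pow, Matrix.mul_smul, Matrix.smul_mul, smul_mulVec,
      Finset.sum_apply, Pi.smul_apply, smul_eq_mul]
  rw [hsum, mulVec_mulVec, mul_sum]
  simp_rw [diagonal_mul_diagonal_inv_mul_mul hd, ← sum_mul, ← mulVec_mulVec]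

theorem diagonal_mulVec_emph (hd : ∀ s, d s ≠ 0) (i : S → ℝ) :
    diagonal d *ᵥ emph γ P d i = (1 - γ • Pᵀ)⁻¹ *ᵥ (diagonal d *ᵥ i) := by
  rw [emph, mulVec_mulVec, diagonal_mul_diagonal_inv_mul_mul hd, ← mulVec_mulVec]

theorem mul_truncEmph_sub_mul_emph (hd : ∀ s, d s ≠ 0) (hU : IsUnit (1 - γ • Pᵀ))
    (i : S → ℝ) (n : ℕ) (s : S) :
    d s * truncEmph γ P d i n s - d s * emph γ P d i s =
      -(γ ^ (n + 1) * ((diagonal d *ᵥ emph γ P d i) ᵥ* P ^ (n + 1)) s) := by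
  have key : diagonal d *ᵥ truncEmph γ P d i n =
      diagonal d *ᵥ emph γ P d i - (γ • Pᵀ) ^ (n + 1) *ᵥ (diagonal d *ᵥ emph γ P d i) := by
    rw [diagonal_mulVec_truncEmph hd, diagonal_mulVec_emph hd,
      geom_sum_eq_one_sub_pow_mul_inv hU, ← mulVec_mulVec, sub_mulVec, one_mulVec]
  have key_s := congrFun key s
  simp only [mulVec_diagonal, Pi.sub_apply] at key_s
  rw [key_s, smul_pow, ← transpose_pow, smul_mulVec, mulVec_transpose, Pi.smul_apply, smul_eq_mul]
  ring

theorem abs_mul_truncEmph_sub_mul_emph (hP : P ∈ rowStochastic ℝ S) (hγ0 : 0 ≤ γ) (hγ1 : γ < 1)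
    (hd : ∀ s, 0 < d s) (i : S → ℝ) (n : ℕ) (s : S) :
    |d s * truncEmph γ P d i n s - d s * emph γ P d i s| =
      γ ^ (n + 1) * |((diagonal d *ᵥ emph γ P d i) ᵥ* P ^ (n + 1)) s| := by
  have hU : IsUnit (1 - γ • Pᵀ) := by
    simpa using (isUnit_transpose _).2
      (isUnit_one_sub_smul_of_mem_rowStochastic hP (abs_lt.2 ⟨by linarith, hγ1⟩))
  rw [mul_truncEmph_sub_mul_emph (fun s => (hd s).ne') hU, abs_neg, abs_mul,
    abs_of_nonneg (pow_nonneg hγ0 _)]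

end Emphasis

theorem sum_abs_mul_le {S : Type*} [Fintype S] {d x : S → ℝ} {C : ℝ} (hd : ∀ s, 0 ≤ d s)
    (hC : ∀ s, d s ≤ C) : ∑ s, |d s * x s| ≤ C * ∑ s, |x s| := by
  rw [mul_sum]
  refine sum_le_sum fun s _ => ?_
  rw [abs_mul, abs_of_nonneg (hd s)]
  exact mul_le_mul_of_nonneg_right (hC s) (abs_nonneg _)

theorem sum_abs_le_inv_mul_sum_abs_mul {S : Type*} [Fintype S] {d x : S → ℝ} {c : ℝ}
    (hc : 0 < c) (hd : ∀ s, c ≤ d s) : ∑ s, |x s| ≤ c⁻¹ * ∑ s, |d s * x s| := by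
  rw [le_inv_mul_iff₀ hc, mul_sum]
  refine sum_le_sum fun s _ => ?_
  rw [abs_mul, abs_of_pos (hc.trans_le (hd s))]
  exact mul_le_mul_of_nonneg_right (hd s) (abs_nonneg _)

theorem truncated_emphasis_bounds_general
    {S : Type} [Fintype S] [DecidableEq S]
    (γ : ℝ) (hγ0 : 0 ≤ γ) (hγ1 : γ < 1)
    (P : Matrix S S ℝ) (hP0 : ∀ s s', 0 ≤ P s s') (hP1 : ∀ s, ∑ s', P s s' = 1)
    (d : S → ℝ) (hd : ∀ s, 0 < d s)
    (i : S → ℝ)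
    (dmax dmin : ℝ)
    (hdmax : IsGreatest (Set.range d) dmax) (hdmin : IsLeast (Set.range d) dmin)
    (n : ℕ) :
    (∑ s, |truncEmph γ P d i n s - emph γ P d i s|) ≤
        γ ^ (n + 1) * (dmax / dmin) * ∑ s, |emph γ P d i s| ∧
      ∀ s, |d s * truncEmph γ P d i n s - d s * emph γ P d i s| ≤
        γ ^ (n + 1) * (dmax ^ 2 / dmin) * ∑ s, |emph γ P d i s| := by
  have hP : P ∈ rowStochastic ℝ S := mem_rowStochastic_iff_sum.2 ⟨hP0, hP1⟩
  obtain ⟨⟨smin, rfl⟩, hdmin⟩ := hdmin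
  have hle_dmax (s : S) : d s ≤ dmax := hdmax.2 ⟨s, rfl⟩
  have herr := abs_mul_truncEmph_sub_mul_emph hP hγ0 hγ1 hd i n
  set m := emph γ P d i
  have hf : ∑ s, |(diagonal d *ᵥ m) s| ≤ dmax * ∑ s, |m s| := by
    simpa only [mulVec_diagonal] using sum_abs_mul_le (fun s => (hd s).le) hle_dmax
  constructor
  · calc ∑ s, |truncEmph γ P d i n s - m s|
        ≤ (d smin)⁻¹ * ∑ s, |d s * truncEmph γ P d i n s - d s * m s| := by
          simpa only [Pi.sub_apply, mul_sub] using sum_abs_le_inv_mul_sum_abs_mul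
            (x := truncEmph γ P d i n - m) (hd smin) (fun s => hdmin ⟨s, rfl⟩)
      _ ≤ (d smin)⁻¹ * (γ ^ (n + 1) * (dmax * ∑ s, |m s|)) := by
          simp_rw [herr, ← mul_sum]
          have hdmin_nonneg := (hd smin).le
          gcongr
          exact (sum_abs_vecMul_le_of_mem_rowStochastic (pow_mem hP _) _).trans hf
      _ = γ ^ (n + 1) * (dmax / d smin) * ∑ s, |m s| := by ring
  · intro s
    have hdmax_le : dmax ≤ dmax ^ 2 / d smin := by
      rw [le_div_iff₀ (hd smin), sq]
      exact mul_le_mul_of_nonneg_left (hle_dmax smin) ((hd smin).le.trans (hle_dmax smin))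
    calc |d s * truncEmph γ P d i n s - d s * m s|
        ≤ γ ^ (n + 1) * (dmax * ∑ s, |m s|) := by
          rw [herr]
          gcongr
          exact (abs_vecMul_le_of_mem_rowStochastic (pow_mem hP _) _ s).trans hf
      _ ≤ γ ^ (n + 1) * (dmax ^ 2 / d smin) * ∑ s, |m s| := by
          rw [mul_assoc]
          gcongr

/-- `‖m_n − m‖₁ ≤ γ^{n+1} (d_max/d_min) ‖m‖₁` and
`‖f_n − f‖_∞ ≤ γ^{n+1} (d_max²/d_min) ‖m‖₁`, where `f_n := D_μ m_n`, `f := D_μ m`. -/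
theorem truncated_emphasis_bounds
    {S : Type} [Fintype S] [DecidableEq S]
    (γ : ℝ) (hγ0 : 0 ≤ γ) (hγ1 : γ < 1)
    (P : Matrix S S ℝ) (hP0 : ∀ s s', 0 ≤ P s s') (hP1 : ∀ s, ∑ s', P s s' = 1)
    (d : S → ℝ) (hd : ∀ s, 0 < d s) (hdsum : ∑ s, d s = 1)
    (i : S → ℝ) (hi : ∀ s, 0 < i s)
    (dmax dmin : ℝ)
    (hdmax : IsGreatest (Set.range d) dmax) (hdmin : IsLeast (Set.range d) dmin)
    (n : ℕ) :
    (∑ s, |truncEmph γ P d i n s - emph γ P d i s|) ≤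
        γ ^ (n + 1) * (dmax / dmin) * ∑ s, |emph γ P d i s| ∧
      ∀ s, |d s * truncEmph γ P d i n s - d s * emph γ P d i s| ≤
        γ ^ (n + 1) * (dmax ^ 2 / dmin) * ∑ s, |emph γ P d i s| :=
  truncated_emphasis_bounds_general γ hγ0 hγ1 P hP0 hP1 d hd i dmax dmin hdmax hdmin n

end
end

section
/- For every vector y ∈ ℝ^S, (1/2) y^⊤ ( D_{f_n}(γP_π − I) + (γP_π^⊤ − I) D_{f_n} ) y ≤ ( γ^{n+1} (d_{μ,max}²/d_{μ,min}) ‖m‖₁ ‖γP_π − I‖ − λ_min ) ‖y‖², where λ_min is the smallest eigenvalue of the symmetric matrix (1/2)( D_f(I − γP_π) + (I − γP_π^⊤) D_f ). -/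
open Matrix Finset

noncomputable section

/-- The spectral norm (ℓ2 operator norm) of a real matrix. -/
def spec {m : Type} [Fintype m] {n : Type} [Fintype n] [DecidableEq n]
    (M : Matrix m n ℝ) : ℝ :=
  ‖LinearMap.toContinuousLinearMap (Matrix.toEuclideanLin M)‖

/-! Summing the geometric series gives `f_n = f - (γ P_πᵀ)^{n+1} f`, so the quadratic form of
`D_{f_n}(γP_π - I)` is that of `D_f(γP_π - I)` minus an error term. The first is at most
`-λ_min ‖y‖²`, because `λ_min` is the least eigenvalue of the symmetric part of `D_f(I - γP_π)`.
As `P_π^{n+1}` is row-stochastic, every entry of `(γ P_πᵀ)^{n+1} f` is bounded by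
`γ^{n+1} ‖f‖₁ ≤ γ^{n+1} d_max ‖m‖₁`, and Cauchy–Schwarz bounds the error term by this times
`‖γP_π - I‖ ‖y‖²`. -/

namespace Matrix

variable {S : Type} [Fintype S]

theorem half_mul_dotProduct_add_transpose_mulVec (M : Matrix S S ℝ) (y : S → ℝ) :
    (1 / 2 : ℝ) * (y ⬝ᵥ (M + Mᵀ) *ᵥ y) = y ⬝ᵥ M *ᵥ y := by
  rw [add_mulVec, dotProduct_add, dotProduct_transpose_mulVec]
  ring

variable [DecidableEq S]

theorem mul_sum_sq_le_dotProduct_mulVec {B : Matrix S S ℝ} (hB : B.IsHermitian) {lam : ℝ}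
    (hlam : ∀ r (v : S → ℝ), v ≠ 0 → B *ᵥ v = r • v → lam ≤ r) (y : S → ℝ) :
    lam * ∑ s, y s ^ 2 ≤ y ⬝ᵥ B *ᵥ y := by
  have hB' : (B - lam • 1).IsHermitian := hB.sub (isHermitian_one.smul (IsSelfAdjoint.all lam))
  have hpos : (B - lam • 1).PosSemidef := by
    refine hB'.posSemidef_iff_eigenvalues_nonneg.2 fun k => ?_
    have hv := hB'.mulVec_eigenvectorBasis k
    rw [sub_mulVec, sub_eq_iff_eq_add, smul_mulVec, one_mulVec, ← add_smul] at hv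
    have := hlam _ _ ((WithLp.ofLp_eq_zero 2).ne.2 (hB'.eigenvectorBasis.orthonormal.ne_zero k)) hv
    exact sub_nonneg.1 (by simpa using this)
  have := hpos.dotProduct_mulVec_nonneg y
  simp only [star_trivial, sub_mulVec, smul_mulVec, one_mulVec, dotProduct_sub, dotProduct_smul,
    smul_eq_mul, sub_nonneg] at this
  simpa [dotProduct, sq] using this

theorem mul_sum_sq_le_dotProduct_mulVec_of_half_add_transpose (M : Matrix S S ℝ) {lam : ℝ}
    (hlam : ∀ r (v : S → ℝ), v ≠ 0 → ((1 / 2 : ℝ) • (M + Mᵀ)) *ᵥ v = r • v → lam ≤ r)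
    (y : S → ℝ) :
    lam * ∑ s, y s ^ 2 ≤ y ⬝ᵥ M *ᵥ y := by
  have hB : ((1 / 2 : ℝ) • (M + Mᵀ)).IsHermitian := by
    simpa [conjTranspose_eq_transpose_of_trivial] using
      (isHermitian_add_transpose_self M).smul (IsSelfAdjoint.all (1 / 2 : ℝ))
  have := mul_sum_sq_le_dotProduct_mulVec hB hlam y
  rwa [smul_mulVec, dotProduct_smul, smul_eq_mul, half_mul_dotProduct_add_transpose_mulVec] at this

theorem sum_sq_mulVec_le (A : Matrix S S ℝ) (y : S → ℝ) :
    ∑ s, (A *ᵥ y) s ^ 2 ≤ spec A ^ 2 * ∑ s, y s ^ 2 := by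
  have h := (LinearMap.toContinuousLinearMap (toEuclideanLin A)).le_opNorm (WithLp.toLp 2 y)
  have := pow_le_pow_left₀ (norm_nonneg _) h 2
  rwa [mul_pow, EuclideanSpace.real_norm_sq_eq, EuclideanSpace.real_norm_sq_eq] at this

theorem abs_dotProduct_diagonal_mul_mulVec_le {e : S → ℝ} {C : ℝ} (he : ∀ s, |e s| ≤ C)
    (A : Matrix S S ℝ) (y : S → ℝ) :
    |y ⬝ᵥ (diagonal e * A) *ᵥ y| ≤ C * spec A * ∑ s, y s ^ 2 := by
  rcases isEmpty_or_nonempty S with _ | ⟨⟨s₀⟩⟩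
  · simp
  have hC : 0 ≤ C := (abs_nonneg _).trans (he s₀)
  have hey : ∑ s, (e s * y s) ^ 2 ≤ C ^ 2 * ∑ s, y s ^ 2 := by
    rw [mul_sum]
    refine sum_le_sum fun s _ => ?_
    rw [mul_pow]
    gcongr ?_ * _
    exact sq_le_sq' (abs_le.1 (he s)).1 (abs_le.1 (he s)).2
  have hsq : (y ⬝ᵥ (diagonal e * A) *ᵥ y) ^ 2 ≤ (C * spec A * ∑ s, y s ^ 2) ^ 2 :=
    calc (y ⬝ᵥ (diagonal e * A) *ᵥ y) ^ 2 = (∑ s, (e s * y s) * (A *ᵥ y) s) ^ 2 := by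
          simp only [← mulVec_mulVec, mulVec_diagonal, dotProduct, mul_left_comm, mul_assoc]
      _ ≤ (∑ s, (e s * y s) ^ 2) * ∑ s, (A *ᵥ y) s ^ 2 := sum_mul_sq_le_sq_mul_sq _ _ _
      _ ≤ (C ^ 2 * ∑ s, y s ^ 2) * (spec A ^ 2 * ∑ s, y s ^ 2) := by
          gcongr
          exact sum_sq_mulVec_le A y
      _ = (C * spec A * ∑ s, y s ^ 2) ^ 2 := by ring
  have hspec : 0 ≤ spec A := norm_nonneg _
  exact abs_le.2 (abs_le_of_sq_le_sq' hsq (by positivity))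

attribute [local instance] Matrix.linftyOpNormedRing Matrix.linftyOpNormedAlgebra in
theorem isUnit_one_sub_smul_of_mem_rowStochastic_s4 {P : Matrix S S ℝ}
    (hP : P ∈ rowStochastic ℝ S) {γ : ℝ} (hγ0 : 0 ≤ γ) (hγ1 : γ < 1) :
    IsUnit (1 - γ • P) := by
  have hP1 : ‖P‖ ≤ 1 := by
    rw [linfty_opNorm_def, NNReal.coe_le_one]
    refine Finset.sup_le fun s _ => ?_
    rw [← NNReal.coe_le_one, NNReal.coe_sum]
    simp [abs_of_nonneg (nonneg_of_mem_rowStochastic hP), sum_row_of_mem_rowStochastic hP]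
  refine (Units.oneSub (γ • P) ?_).isUnit
  calc ‖γ • P‖ ≤ ‖γ‖ * ‖P‖ := norm_smul_le _ _
    _ < 1 := by rw [Real.norm_of_nonneg hγ0]; nlinarith [norm_nonneg P]

theorem abs_transpose_mulVec_le_sum_abs {P : Matrix S S ℝ} (hP : P ∈ rowStochastic ℝ S)
    (v : S → ℝ) (s : S) : |(Pᵀ *ᵥ v) s| ≤ ∑ t, |v t| := by
  calc |(Pᵀ *ᵥ v) s| ≤ ∑ t, |P t s * v t| := abs_sum_le_sum_abs _ _
    _ ≤ ∑ t, |v t| := sum_le_sum fun t _ => by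
        rw [abs_mul, abs_of_nonneg (nonneg_of_mem_rowStochastic hP)]
        exact mul_le_of_le_one_left (abs_nonneg _) (le_one_of_mem_rowStochastic hP)

theorem abs_smul_pow_transpose_mulVec_le {P : Matrix S S ℝ} (hP : P ∈ rowStochastic ℝ S)
    {γ : ℝ} (hγ : 0 ≤ γ) (k : ℕ) (v : S → ℝ) (s : S) :
    |((γ • Pᵀ) ^ k *ᵥ v) s| ≤ γ ^ k * ∑ t, |v t| := by
  rw [smul_pow, ← transpose_pow, smul_mulVec, Pi.smul_apply, smul_eq_mul, abs_mul,
    abs_of_nonneg (pow_nonneg hγ _)]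
  gcongr
  exact abs_transpose_mulVec_le_sum_abs (pow_mem hP k) v s

theorem geom_sum_eq_inv_sub_pow_mul_inv {X : Matrix S S ℝ} (hX : IsUnit (1 - X)) (n : ℕ) :
    ∑ j ∈ range n, X ^ j = (1 - X)⁻¹ - X ^ n * (1 - X)⁻¹ := by
  calc ∑ j ∈ range n, X ^ j = (∑ j ∈ range n, X ^ j) * (1 - X) * (1 - X)⁻¹ :=
        (mul_nonsing_inv_cancel_right _ _ ((isUnit_iff_isUnit_det _).1 hX)).symm
    _ = _ := by rw [geom_sum_mul_neg, sub_mul, one_mul]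

theorem diagonal_mul_diagonal_inv_mul_mul_diagonal {d : S → ℝ} (hd : ∀ s, d s ≠ 0)
    (M : Matrix S S ℝ) :
    diagonal d * (diagonal (fun s => (d s)⁻¹) * M * diagonal d) = M * diagonal d := by
  rw [← Matrix.mul_assoc, ← Matrix.mul_assoc, diagonal_mul_diagonal]
  simp [mul_inv_cancel₀ (hd _)]

end Matrix

section Emphasis

variable {S : Type} [Fintype S] {d : S → ℝ}

theorem sum_abs_mul_le_sq_div_mul_sum_abs (hd : ∀ s, 0 < d s) {dmax dmin : ℝ}
    (hdmax : IsGreatest (Set.range d) dmax) (hdmin : IsLeast (Set.range d) dmin) (m : S → ℝ) :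
    ∑ s, |d s * m s| ≤ dmax ^ 2 / dmin * ∑ s, |m s| := by
  obtain ⟨smin, rfl⟩ := hdmin.1
  have hdmin_le : d smin ≤ dmax := hdmax.2 ⟨smin, rfl⟩
  have hdmax_le : dmax ≤ dmax ^ 2 / d smin := by
    rw [le_div_iff₀ (hd smin), sq]
    exact mul_le_mul_of_nonneg_left hdmin_le ((hd smin).trans_le hdmin_le).le
  calc ∑ s, |d s * m s| ≤ ∑ s, dmax * |m s| := sum_le_sum fun s _ => by
        rw [abs_mul, abs_of_pos (hd s)]
        exact mul_le_mul_of_nonneg_right (hdmax.2 ⟨s, rfl⟩) (abs_nonneg _)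
    _ ≤ dmax ^ 2 / d smin * ∑ s, |m s| := by
        rw [← mul_sum]
        exact mul_le_mul_of_nonneg_right hdmax_le (sum_nonneg fun _ _ => abs_nonneg _)

variable [DecidableEq S]

theorem abs_smul_pow_transpose_mulVec_mul_le {P : Matrix S S ℝ} (hP : P ∈ rowStochastic ℝ S)
    {γ : ℝ} (hγ : 0 ≤ γ) (hd : ∀ s, 0 < d s) {dmax dmin : ℝ}
    (hdmax : IsGreatest (Set.range d) dmax) (hdmin : IsLeast (Set.range d) dmin) (k : ℕ)
    (m : S → ℝ) (s : S) :
    |((γ • Pᵀ) ^ k *ᵥ fun t => d t * m t) s| ≤ γ ^ k * (dmax ^ 2 / dmin) * ∑ t, |m t| := by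
  rw [mul_assoc]
  exact (abs_smul_pow_transpose_mulVec_le hP hγ k _ s).trans <|
    mul_le_mul_of_nonneg_left (sum_abs_mul_le_sq_div_mul_sum_abs hd hdmax hdmin m) (pow_nonneg hγ k)

theorem mul_conj_diagonal_mulVec_apply (hd : ∀ s, d s ≠ 0) (M : Matrix S S ℝ) (v : S → ℝ)
    (s : S) :
    d s * (((diagonal fun s => (d s)⁻¹) * M * diagonal d) *ᵥ v) s =
      (M *ᵥ fun s => d s * v s) s := by
  rw [← mulVec_diagonal, mulVec_mulVec, diagonal_mul_diagonal_inv_mul_mul_diagonal hd,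
    ← mulVec_mulVec, funext (mulVec_diagonal d v)]

theorem mul_emph_eq_inv_mulVec (hd : ∀ s, d s ≠ 0) (γ : ℝ) (P : Matrix S S ℝ) (i : S → ℝ) :
    (fun s => d s * emph γ P d i s) = (1 - γ • Pᵀ)⁻¹ *ᵥ fun s => d s * i s :=
  funext (mul_conj_diagonal_mulVec_apply hd _ i)

theorem mul_truncEmph_eq_sub_pow_mulVec (hd : ∀ s, d s ≠ 0) {γ : ℝ} {P : Matrix S S ℝ}
    (hP : IsUnit (1 - γ • Pᵀ)) (i : S → ℝ) (n : ℕ) :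
    (fun s => d s * truncEmph γ P d i n s) =
      (fun s => d s * emph γ P d i s) - (γ • Pᵀ) ^ (n + 1) *ᵥ fun s => d s * emph γ P d i s := by
  have hsum : (fun s => d s * truncEmph γ P d i n s) =
      (∑ j ∈ range (n + 1), (γ • Pᵀ) ^ j) *ᵥ fun s => d s * i s := by
    ext s
    simp only [truncEmph, mul_sum, sum_mulVec, Finset.sum_apply, mul_left_comm (d s),
      mul_conj_diagonal_mulVec_apply hd, smul_pow, smul_mulVec, Pi.smul_apply, smul_eq_mul]
  rw [hsum, geom_sum_eq_inv_sub_pow_mul_inv hP, sub_mulVec, ← mulVec_mulVec,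
    mul_emph_eq_inv_mulVec hd]

end Emphasis

theorem truncated_emphasis_quadratic_form_bound_general
    {S : Type} [Fintype S] [DecidableEq S]
    (γ : ℝ) (hγ0 : 0 ≤ γ) (hγ1 : γ < 1)
    (P : Matrix S S ℝ) (hP0 : ∀ s s', 0 ≤ P s s') (hP1 : ∀ s, ∑ s', P s s' = 1)
    (d : S → ℝ) (hd : ∀ s, 0 < d s)
    (i : S → ℝ)
    (dmax dmin : ℝ)
    (hdmax : IsGreatest (Set.range d) dmax) (hdmin : IsLeast (Set.range d) dmin)
    (n : ℕ)
    (lammin : ℝ)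
    (hlam : IsLeast {r : ℝ | ∃ v : S → ℝ, v ≠ 0 ∧
        (((1 : ℝ)/2) • (Matrix.diagonal (fun s => d s * emph γ P d i s) * (1 - γ • P) +
          (1 - γ • Pᵀ) * Matrix.diagonal (fun s => d s * emph γ P d i s))).mulVec v = r • v}
      lammin) :
    ∀ y : S → ℝ,
      (1/2 : ℝ) * (∑ s, y s *
          ((Matrix.diagonal (fun s => d s * truncEmph γ P d i n s) * (γ • P - 1) +
            (γ • Pᵀ - 1) * Matrix.diagonal (fun s => d s * truncEmph γ P d i n s)).mulVec y) s) ≤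
        (γ ^ (n + 1) * (dmax ^ 2 / dmin) * (∑ s, |emph γ P d i s|) * spec (γ • P - 1)
          - lammin) * ∑ s, (y s) ^ 2 := by
  intro y
  have hP : P ∈ rowStochastic ℝ S := mem_rowStochastic_iff_sum.2 ⟨hP0, hP1⟩
  have hU : IsUnit (1 - γ • Pᵀ) := by
    simpa using (isUnit_transpose _).2 (isUnit_one_sub_smul_of_mem_rowStochastic_s4 hP hγ0 hγ1)
  have hT : ∀ (w : S → ℝ) (X : Matrix S S ℝ), Xᵀ * diagonal w = (diagonal w * X)ᵀ := by
    simp [transpose_mul]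
  set f := fun s => d s * emph γ P d i s
  set E := (γ • Pᵀ) ^ (n + 1) *ᵥ f
  have hrayleigh := mul_sum_sq_le_dotProduct_mulVec_of_half_add_transpose
    (diagonal f * (1 - γ • P))
    (fun r v hv hBv => hlam.2 ⟨v, hv, by simpa [hT, transpose_sub] using hBv⟩) y
  have herr := abs_dotProduct_diagonal_mul_mulVec_le
    (abs_smul_pow_transpose_mulVec_mul_le hP hγ0 hd hdmax hdmin (n + 1) (emph γ P d i))
    (γ • P - 1) y
  rw [← neg_sub (γ • P) 1, mul_neg, neg_mulVec, dotProduct_neg] at hrayleigh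
  show (1 / 2 : ℝ) * (y ⬝ᵥ _) ≤ _
  rw [show γ • Pᵀ - 1 = (γ • P - 1)ᵀ by simp [transpose_sub], hT,
    half_mul_dotProduct_add_transpose_mulVec,
    mul_truncEmph_eq_sub_pow_mulVec (fun s => (hd s).ne') hU,
    show diagonal (f - E) = diagonal f - diagonal E from (diagonal_sub f E).symm, sub_mul,
    sub_mulVec, dotProduct_sub]
  linarith [(abs_le.1 herr).1]

/-- for every `y`,
`(1/2) yᵀ (D_{f_n}(γP−I) + (γPᵀ−I)D_{f_n}) y ≤
 (γ^{n+1} (d_max²/d_min) ‖m‖₁ ‖γP−I‖ − λ_min) ‖y‖²`,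
where `λ_min` is the smallest eigenvalue of `(1/2)(D_f(I−γP) + (I−γPᵀ)D_f)`. -/
theorem truncated_emphasis_quadratic_form_bound
    {S : Type} [Fintype S] [DecidableEq S]
    (γ : ℝ) (hγ0 : 0 ≤ γ) (hγ1 : γ < 1)
    (P : Matrix S S ℝ) (hP0 : ∀ s s', 0 ≤ P s s') (hP1 : ∀ s, ∑ s', P s s' = 1)
    (d : S → ℝ) (hd : ∀ s, 0 < d s) (hdsum : ∑ s, d s = 1)
    (i : S → ℝ) (hi : ∀ s, 0 < i s)
    (dmax dmin : ℝ)
    (hdmax : IsGreatest (Set.range d) dmax) (hdmin : IsLeast (Set.range d) dmin)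
    (n : ℕ)
    (lammin : ℝ)
    (hlam : IsLeast {r : ℝ | ∃ v : S → ℝ, v ≠ 0 ∧
        (((1 : ℝ)/2) • (Matrix.diagonal (fun s => d s * emph γ P d i s) * (1 - γ • P) +
          (1 - γ • Pᵀ) * Matrix.diagonal (fun s => d s * emph γ P d i s))).mulVec v = r • v}
      lammin) :
    ∀ y : S → ℝ,
      (1/2 : ℝ) * (∑ s, y s *
          ((Matrix.diagonal (fun s => d s * truncEmph γ P d i n s) * (γ • P - 1) +
            (γ • Pᵀ - 1) * Matrix.diagonal (fun s => d s * truncEmph γ P d i n s)).mulVec y) s) ≤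
        (γ ^ (n + 1) * (dmax ^ 2 / dmin) * (∑ s, |emph γ P d i s|) * spec (γ • P - 1)
          - lammin) * ∑ s, (y s) ^ 2 :=
  truncated_emphasis_quadratic_form_bound_general γ hγ0 hγ1 P hP0 hP1 d hd i dmax dmin hdmax hdmin n
    lammin hlam
end
end

section
/- If γ^{n+1} < κ d_{μ,min} min_s( i(s) d_μ(s) ) / ( d_{μ,max}² ‖I − γP_π^⊤‖_∞ ‖m‖₁ ), where κ := min_s d_μ(s) i(s) / f(s), then for every vector v ∈ ℝ^S, γ ‖P_π v‖_{f_n}² ≤ ‖v‖_{f_n}². -/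
/-!
With `f_n = ∑_{j ≤ n} (γPᵀ)^j (D_μ i)`, the geometric-sum identity gives
`γPᵀ f_n = f_n - D_μ i + (γPᵀ)^{n+1} D_μ i`, so `γPᵀ f_n ≤ f_n` once the tail
`γ^{n+1} (Pᵀ)^{n+1} D_μ i` lies below `D_μ i`; together with Jensen's inequality
`(P v)² ≤ P (v²)` this is the contraction. The tail is at most `γ^{n+1} ∑_s d(s) i(s)`, which the
hypothesis on `n` bounds by `min_s i(s) d(s)` using `κ ≤ ‖I - γPᵀ‖_∞` (read `(I - γPᵀ) f = D_μ i`
off where `f` is largest) and `∑_s d(s) i(s) ≤ d_max ‖m‖₁` (since `f ≥ D_μ i`, by the minimum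
principle for `x = b + γ P x`).
-/

open Matrix Finset

noncomputable section

lemma mul_le_of_lt_threshold {q T κ dmin dmax ninf M idmin : ℝ} (hq : 0 ≤ q) (hT : T ≤ dmax * M)
    (hκ : κ ≤ ninf) (hdmin : 0 ≤ dmin) (hdminmax : dmin ≤ dmax) (hninf : 0 ≤ ninf) (hM : 0 ≤ M)
    (hidmin : 0 ≤ idmin) (h : q < κ * dmin * idmin / (dmax ^ 2 * ninf * M)) : q * T ≤ idmin := by
  have hdmax : 0 ≤ dmax := hdmin.trans hdminmax
  have hD : 0 < dmax ^ 2 * ninf * M := by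
    refine (by positivity : 0 ≤ dmax ^ 2 * ninf * M).lt_of_ne fun hD => ?_
    rw [← hD, div_zero] at h
    linarith
  rw [lt_div_iff₀ hD] at h
  have hupper : dmax * ninf * (q * T) < dmax * ninf * idmin :=
    calc dmax * ninf * (q * T) ≤ q * (dmax ^ 2 * ninf * M) := by
          nlinarith [mul_le_mul_of_nonneg_left hT (by positivity : 0 ≤ dmax * ninf * q)]
      _ < κ * dmin * idmin := h
      _ ≤ dmax * ninf * idmin := by
          nlinarith [mul_le_mul hκ hdminmax hdmin hninf]
  exact (lt_of_mul_lt_mul_left hupper (by positivity)).le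

namespace Matrix

variable {S : Type*} [Fintype S]

lemma exists_mulVec_apply_div_le_sum_abs [Nonempty S] (B : Matrix S S ℝ) {f : S → ℝ}
    (hf : 0 ≤ f) : ∃ s, (B *ᵥ f) s / f s ≤ ∑ t, |B s t| := by
  obtain ⟨s, hs⟩ := Finite.exists_max f
  refine ⟨s, ?_⟩
  rcases (show (0 : ℝ) ≤ f s from hf s).eq_or_lt with hfs | hfs
  · rw [← hfs, div_zero]
    exact sum_nonneg fun t _ => abs_nonneg _
  rw [div_le_iff₀ hfs, sum_mul]
  exact sum_le_sum fun t _ =>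
    calc B s t * f t ≤ |B s t| * f t := mul_le_mul_of_nonneg_right (le_abs_self _) (hf t)
      _ ≤ |B s t| * f s := mul_le_mul_of_nonneg_left (hs t) (abs_nonneg _)

variable [DecidableEq S]

lemma mulVec_geom_sum_le {R : Type*} [Ring R] [PartialOrder R] [IsOrderedAddMonoid R]
    (A : Matrix S S R) {x : S → R} {n : ℕ} (h : A ^ n *ᵥ x ≤ x) :
    A *ᵥ ((∑ j ∈ range n, A ^ j) *ᵥ x) ≤ (∑ j ∈ range n, A ^ j) *ᵥ x := by
  have hA : A * ∑ j ∈ range n, A ^ j = ∑ j ∈ range n, A ^ j - 1 + A ^ n := by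
    have hgeom := mul_neg_geom_sum A n
    rw [sub_mul, one_mul] at hgeom
    calc A * ∑ j ∈ range n, A ^ j
        = ∑ j ∈ range n, A ^ j - (∑ j ∈ range n, A ^ j - A * ∑ j ∈ range n, A ^ j) := by abel
      _ = ∑ j ∈ range n, A ^ j - 1 + A ^ n := by rw [hgeom]; abel
  rw [mulVec_mulVec, hA, add_mulVec, sub_mulVec, one_mulVec]
  calc _ ≤ (∑ j ∈ range n, A ^ j) *ᵥ x - x + x := by gcongr
    _ = _ := sub_add_cancel _ _

lemma smul_transpose_pow_mulVec (γ : ℝ) (P : Matrix S S ℝ) (k : ℕ) (x : S → ℝ) :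
    (γ • Pᵀ) ^ k *ᵥ x = γ ^ k • (x ᵥ* P ^ k) := by
  rw [smul_pow, smul_mulVec, ← transpose_pow, mulVec_transpose]

lemma inv_one_sub_smul_transpose_mulVec (γ : ℝ) (P : Matrix S S ℝ) (x : S → ℝ) :
    (1 - γ • Pᵀ)⁻¹ *ᵥ x = x ᵥ* (1 - γ • P)⁻¹ := by
  rw [← mulVec_transpose, transpose_nonsing_inv, transpose_sub, transpose_one, transpose_smul]

lemma mul_diagonal_inv_mul_mul_diagonal_mulVec (A : Matrix S S ℝ) {d : S → ℝ} {s : S}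
    (hd : d s ≠ 0) (x : S → ℝ) :
    d s * (((diagonal fun s => (d s)⁻¹) * A * diagonal d) *ᵥ x) s = (A *ᵥ (d * x)) s := by
  have hdx : diagonal d *ᵥ x = d * x := funext fun t => mulVec_diagonal d x t
  rw [← mulVec_mulVec, ← mulVec_mulVec, hdx, mulVec_diagonal, mul_inv_cancel_left₀ hd]

variable {P : Matrix S S ℝ} {γ : ℝ}

lemma le_mulVec_apply_of_forall_le (hP : P ∈ rowStochastic ℝ S) {x : S → ℝ} {c : ℝ}
    (hc : ∀ t, c ≤ x t) (s : S) : c ≤ (P *ᵥ x) s :=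
  calc c = ∑ t, P s t * c := by rw [← sum_mul, sum_row_of_mem_rowStochastic hP, one_mul]
    _ ≤ ∑ t, P s t * x t :=
      sum_le_sum fun t _ => mul_le_mul_of_nonneg_left (hc t) (nonneg_of_mem_rowStochastic hP)

lemma vecMul_apply_le_sum_of_mem_rowStochastic (hP : P ∈ rowStochastic ℝ S) {x : S → ℝ}
    (hx : 0 ≤ x) (s : S) : (x ᵥ* P) s ≤ ∑ t, x t :=
  sum_le_sum fun t _ => mul_le_of_le_one_right (hx t) (le_one_of_mem_rowStochastic hP)

lemma sq_mulVec_apply_le_of_mem_rowStochastic (hP : P ∈ rowStochastic ℝ S) (v : S → ℝ)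
    (s : S) : (P *ᵥ v) s ^ 2 ≤ (P *ᵥ v ^ 2) s := by
  simpa [mulVec, dotProduct] using (even_two.convexOn_pow (𝕜 := ℝ)).map_sum_le
    (t := univ) (w := P s) (p := v) (fun t _ => nonneg_of_mem_rowStochastic hP)
    (sum_row_of_mem_rowStochastic hP s) (fun t _ => Set.mem_univ _)

-- Minimum principle: at a minimiser of `x`, averaging by `P` cannot decrease `x`.
lemma le_of_eq_add_smul_mulVec (hP : P ∈ rowStochastic ℝ S) (hγ0 : 0 ≤ γ) (hγ1 : γ < 1)
    {b x : S → ℝ} (hb : 0 ≤ b) (hx : x = b + γ • (P *ᵥ x)) : b ≤ x := by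
  have hx0 : 0 ≤ x := by
    intro s
    have : Nonempty S := ⟨s⟩
    obtain ⟨s₀, hs₀⟩ := Finite.exists_min x
    have hPx : x s₀ ≤ (P *ᵥ x) s₀ := le_mulVec_apply_of_forall_le hP hs₀ s₀
    have hxs₀ : x s₀ = b s₀ + γ * (P *ᵥ x) s₀ := congrFun hx s₀
    have hb₀ : 0 ≤ b s₀ := hb s₀
    have : 0 ≤ x s₀ := by nlinarith [mul_le_mul_of_nonneg_left hPx hγ0]
    exact this.trans (hs₀ s)
  intro s
  rw [hx]
  simpa using mul_nonneg hγ0 (nonneg_mulVec_of_mem_rowStochastic hP hx0 s)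

lemma isUnit_det_one_sub_smul (hP : P ∈ rowStochastic ℝ S) (hγ0 : 0 ≤ γ) (hγ1 : γ < 1) :
    IsUnit (1 - γ • P).det := by
  rw [isUnit_iff_ne_zero, Ne, ← exists_mulVec_eq_zero_iff]
  rintro ⟨v, hv0, hv⟩
  have hfix : ∀ w, (1 - γ • P) *ᵥ w = 0 → w = 0 + γ • (P *ᵥ w) := fun w hw => by
    rw [sub_mulVec, one_mulVec, sub_eq_zero] at hw
    rw [zero_add, ← smul_mulVec, ← hw]
  have hnonneg := le_of_eq_add_smul_mulVec hP hγ0 hγ1 le_rfl (hfix v hv)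
  have hnonpos := le_of_eq_add_smul_mulVec hP hγ0 hγ1 le_rfl (hfix (-v) (by simp [mulVec_neg, hv]))
  exact hv0 (le_antisymm (by simpa using hnonpos) hnonneg)

lemma one_apply_le_inv_one_sub_smul_apply (hP : P ∈ rowStochastic ℝ S) (hγ0 : 0 ≤ γ)
    (hγ1 : γ < 1) (s t : S) : (1 : Matrix S S ℝ) s t ≤ (1 - γ • P)⁻¹ s t := by
  have hfix : (1 - γ • P)⁻¹ *ᵥ Pi.single t 1 =
      Pi.single t 1 + γ • (P *ᵥ ((1 - γ • P)⁻¹ *ᵥ Pi.single t 1)) := by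
    have h := congrArg (· *ᵥ Pi.single t (1 : ℝ))
      (mul_nonsing_inv _ (isUnit_det_one_sub_smul hP hγ0 hγ1))
    simp only [← mulVec_mulVec, sub_mulVec, one_mulVec, smul_mulVec] at h
    exact eq_add_of_sub_eq h
  have := le_of_eq_add_smul_mulVec hP hγ0 hγ1 (Pi.single_nonneg.2 zero_le_one) hfix s
  simpa [mulVec_single_one, one_apply, Pi.single_apply, eq_comm] using this

lemma le_vecMul_inv_one_sub_smul (hP : P ∈ rowStochastic ℝ S) (hγ0 : 0 ≤ γ) (hγ1 : γ < 1)
    {x : S → ℝ} (hx : 0 ≤ x) : x ≤ x ᵥ* (1 - γ • P)⁻¹ := fun s =>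
  calc x s = (x ᵥ* 1) s := by rw [vecMul_one]
    _ ≤ (x ᵥ* (1 - γ • P)⁻¹) s := sum_le_sum fun t _ =>
      mul_le_mul_of_nonneg_left (one_apply_le_inv_one_sub_smul_apply hP hγ0 hγ1 t s) (hx t)

theorem weighted_sq_mulVec_le (hP : P ∈ rowStochastic ℝ S) (hγ0 : 0 ≤ γ) {w : S → ℝ}
    (hw : 0 ≤ w) (hwP : (γ • Pᵀ) *ᵥ w ≤ w) (v : S → ℝ) :
    γ * ∑ s, w s * (P *ᵥ v) s ^ 2 ≤ ∑ s, w s * v s ^ 2 :=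
  calc γ * ∑ s, w s * (P *ᵥ v) s ^ 2 ≤ γ * ∑ s, w s * (P *ᵥ v ^ 2) s := by
        gcongr with s
        exacts [hw s, sq_mulVec_apply_le_of_mem_rowStochastic hP v s]
    _ = ((γ • Pᵀ) *ᵥ w) ⬝ᵥ v ^ 2 := by
        change γ * (w ⬝ᵥ P *ᵥ v ^ 2) = _
        rw [dotProduct_mulVec, smul_mulVec, mulVec_transpose, smul_dotProduct, smul_eq_mul]
    _ ≤ ∑ s, w s * v s ^ 2 := sum_le_sum fun s _ =>
        mul_le_mul_of_nonneg_right (hwP s) (sq_nonneg (v s))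

end Matrix

open Matrix

section Emphasis

variable {S : Type} [Fintype S] [DecidableEq S] {γ : ℝ} {P : Matrix S S ℝ} {d i : S → ℝ}

lemma mul_emph_apply (hd : ∀ s, d s ≠ 0) (s : S) :
    d s * emph γ P d i s = ((1 - γ • Pᵀ)⁻¹ *ᵥ (d * i)) s :=
  mul_diagonal_inv_mul_mul_diagonal_mulVec _ (hd s) i

lemma mul_truncEmph_apply (hd : ∀ s, d s ≠ 0) (n : ℕ) (s : S) :
    d s * truncEmph γ P d i n s = ((∑ j ∈ range (n + 1), (γ • Pᵀ) ^ j) *ᵥ (d * i)) s := by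
  simp only [truncEmph, mul_sum, sum_mulVec, Finset.sum_apply]
  refine sum_congr rfl fun j _ => ?_
  rw [mul_left_comm, mul_diagonal_inv_mul_mul_diagonal_mulVec _ (hd s), smul_transpose_pow_mulVec,
    Pi.smul_apply, smul_eq_mul, ← mulVec_transpose, transpose_pow]

lemma mul_le_mul_emph (hP : P ∈ rowStochastic ℝ S) (hγ0 : 0 ≤ γ) (hγ1 : γ < 1)
    (hd : ∀ s, d s ≠ 0) (hdi : 0 ≤ d * i) (s : S) : d s * i s ≤ d s * emph γ P d i s := by
  rw [mul_emph_apply hd, inv_one_sub_smul_transpose_mulVec]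
  exact le_vecMul_inv_one_sub_smul hP hγ0 hγ1 hdi s

lemma exists_div_mul_emph_le_sum_abs [Nonempty S] (hP : P ∈ rowStochastic ℝ S) (hγ0 : 0 ≤ γ)
    (hγ1 : γ < 1) (hd : ∀ s, d s ≠ 0) (hdi : 0 ≤ d * i) :
    ∃ s, d s * i s / (d s * emph γ P d i s) ≤ ∑ t, |(1 - γ • Pᵀ) s t| := by
  have hunit : IsUnit (1 - γ • Pᵀ).det := by
    simpa [← det_transpose (1 - γ • Pᵀ)] using isUnit_det_one_sub_smul hP hγ0 hγ1
  have hf : 0 ≤ (1 - γ • Pᵀ)⁻¹ *ᵥ (d * i) := fun s =>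
    (hdi s).trans ((mul_le_mul_emph hP hγ0 hγ1 hd hdi s).trans_eq (mul_emph_apply hd s))
  obtain ⟨s, hs⟩ := exists_mulVec_apply_div_le_sum_abs (1 - γ • Pᵀ) hf
  rw [mulVec_mulVec, mul_nonsing_inv _ hunit, one_mulVec, ← mul_emph_apply hd] at hs
  exact ⟨s, hs⟩

lemma sum_mul_le_mul_sum_abs_emph (hP : P ∈ rowStochastic ℝ S) (hγ0 : 0 ≤ γ) (hγ1 : γ < 1)
    (hd : ∀ s, 0 < d s) (hdi : 0 ≤ d * i) {dmax : ℝ} (hdmax : ∀ s, d s ≤ dmax) :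
    ∑ s, d s * i s ≤ dmax * ∑ s, |emph γ P d i s| := by
  rw [mul_sum]
  refine sum_le_sum fun s _ => ?_
  calc d s * i s ≤ d s * emph γ P d i s := mul_le_mul_emph hP hγ0 hγ1 (fun s => (hd s).ne') hdi s
    _ ≤ d s * |emph γ P d i s| := mul_le_mul_of_nonneg_left (le_abs_self _) (hd s).le
    _ ≤ dmax * |emph γ P d i s| := mul_le_mul_of_nonneg_right (hdmax s) (abs_nonneg _)

theorem truncEmph_weighted_contraction_of_tail_le (hP : P ∈ rowStochastic ℝ S) (hγ0 : 0 ≤ γ)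
    (hd : ∀ s, d s ≠ 0) (hdi : 0 ≤ d * i) {n : ℕ}
    (htail : ∀ s, γ ^ (n + 1) * ∑ t, d t * i t ≤ d s * i s) (v : S → ℝ) :
    γ * ∑ s, (d s * truncEmph γ P d i n s) * (P *ᵥ v) s ^ 2 ≤
      ∑ s, (d s * truncEmph γ P d i n s) * v s ^ 2 := by
  have hweight : 0 ≤ (∑ j ∈ range (n + 1), (γ • Pᵀ) ^ j) *ᵥ (d * i) := by
    rw [sum_mulVec]
    refine sum_nonneg fun j _ => ?_
    rw [smul_transpose_pow_mulVec]
    exact smul_nonneg (pow_nonneg hγ0 j) (nonneg_vecMul_of_mem_rowStochastic (pow_mem hP j) hdi)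
  have hkey : (γ • Pᵀ) ^ (n + 1) *ᵥ (d * i) ≤ d * i := fun s => by
    rw [smul_transpose_pow_mulVec, Pi.smul_apply, smul_eq_mul]
    calc γ ^ (n + 1) * ((d * i) ᵥ* P ^ (n + 1)) s ≤ γ ^ (n + 1) * ∑ t, d t * i t := by
          gcongr
          exact vecMul_apply_le_sum_of_mem_rowStochastic (pow_mem hP _) hdi s
      _ ≤ d s * i s := htail s
  simp only [mul_truncEmph_apply hd]
  exact weighted_sq_mulVec_le hP hγ0 hweight (mulVec_geom_sum_le _ hkey) v

end Emphasis

theorem truncated_emphasis_weighted_contraction_general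
    {S : Type} [Fintype S] [DecidableEq S]
    (γ : ℝ) (hγ0 : 0 ≤ γ) (hγ1 : γ < 1)
    (P : Matrix S S ℝ) (hP0 : ∀ s s', 0 ≤ P s s') (hP1 : ∀ s, ∑ s', P s s' = 1)
    (d : S → ℝ) (hd : ∀ s, 0 < d s)
    (i : S → ℝ) (hi : ∀ s, 0 < i s)
    (dmax dmin : ℝ)
    (hdmax : IsGreatest (Set.range d) dmax) (hdmin : IsLeast (Set.range d) dmin)
    (κ : ℝ)
    (hκ : IsLeast (Set.range fun s => d s * i s / (d s * emph γ P d i s)) κ)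
    (idmin : ℝ)
    (hidmin : IsLeast (Set.range fun s => i s * d s) idmin)
    (ninf : ℝ)
    (hninf : IsGreatest (Set.range fun s => ∑ s', |(1 - γ • Pᵀ) s s'|) ninf)
    (n : ℕ)
    (hn : γ ^ (n + 1) < κ * dmin * idmin / (dmax ^ 2 * ninf * ∑ s, |emph γ P d i s|)) :
    ∀ v : S → ℝ,
      γ * ∑ s, (d s * truncEmph γ P d i n s) * (P.mulVec v s) ^ 2 ≤
        ∑ s, (d s * truncEmph γ P d i n s) * (v s) ^ 2 := by
  have hP : P ∈ rowStochastic ℝ S := mem_rowStochastic_iff_sum.2 ⟨hP0, hP1⟩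
  have hd0 (s : S) : d s ≠ 0 := (hd s).ne'
  have hdi : 0 ≤ d * i := fun s => (mul_pos (hd s) (hi s)).le
  obtain ⟨s₀, -⟩ := hdmax.1
  have : Nonempty S := ⟨s₀⟩
  obtain ⟨s, hs⟩ := exists_div_mul_emph_le_sum_abs hP hγ0 hγ1 hd0 hdi
  have hκ_le : κ ≤ ninf := (hκ.2 ⟨s, rfl⟩).trans (hs.trans (hninf.2 ⟨s, rfl⟩))
  obtain ⟨smin, rfl⟩ := hdmin.1
  obtain ⟨sid, rfl⟩ := hidmin.1
  have htail : γ ^ (n + 1) * ∑ t, d t * i t ≤ i sid * d sid :=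
    mul_le_of_lt_threshold (pow_nonneg hγ0 _)
      (sum_mul_le_mul_sum_abs_emph hP hγ0 hγ1 hd hdi fun s => hdmax.2 ⟨s, rfl⟩) hκ_le
      (hd smin).le (hdmax.2 ⟨smin, rfl⟩)
      ((sum_nonneg fun _ _ => abs_nonneg _).trans (hninf.2 ⟨s₀, rfl⟩))
      (sum_nonneg fun _ _ => abs_nonneg _) (mul_pos (hi sid) (hd sid)).le hn
  exact truncEmph_weighted_contraction_of_tail_le hP hγ0 hd0 hdi fun s =>
    htail.trans ((hidmin.2 ⟨s, rfl⟩).trans_eq (mul_comm _ _))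

/-- if
`γ^{n+1} < κ d_min min_s(i(s)d(s)) / (d_max² ‖I − γPᵀ‖_∞ ‖m‖₁)`,
with `κ := min_s d(s)i(s)/f(s)`, then `γ ‖P v‖²_{f_n} ≤ ‖v‖²_{f_n}` for every `v`. -/
theorem truncated_emphasis_weighted_contraction
    {S : Type} [Fintype S] [DecidableEq S]
    (γ : ℝ) (hγ0 : 0 ≤ γ) (hγ1 : γ < 1)
    (P : Matrix S S ℝ) (hP0 : ∀ s s', 0 ≤ P s s') (hP1 : ∀ s, ∑ s', P s s' = 1)
    (d : S → ℝ) (hd : ∀ s, 0 < d s) (hdsum : ∑ s, d s = 1)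
    (i : S → ℝ) (hi : ∀ s, 0 < i s)
    (dmax dmin : ℝ)
    (hdmax : IsGreatest (Set.range d) dmax) (hdmin : IsLeast (Set.range d) dmin)
    (κ : ℝ)
    (hκ : IsLeast (Set.range fun s => d s * i s / (d s * emph γ P d i s)) κ)
    (idmin : ℝ)
    (hidmin : IsLeast (Set.range fun s => i s * d s) idmin)
    (ninf : ℝ)
    (hninf : IsGreatest (Set.range fun s => ∑ s', |(1 - γ • Pᵀ) s s'|) ninf)
    (n : ℕ)
    (hn : γ ^ (n + 1) < κ * dmin * idmin / (dmax ^ 2 * ninf * ∑ s, |emph γ P d i s|)) :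
    ∀ v : S → ℝ,
      γ * ∑ s, (d s * truncEmph γ P d i n s) * (P.mulVec v s) ^ 2 ≤
        ∑ s, (d s * truncEmph γ P d i n s) * (v s) ^ 2 :=
  truncated_emphasis_weighted_contraction_general γ hγ0 hγ1 P hP0 hP1 d hd i hi dmax dmin hdmax
    hdmin κ hκ idmin hidmin ninf hninf n hn

end
end

section
/- Suppose that for every (μ, π) ∈ Λ_M × Λ_Π the projected Bellman operator Π_{f_{n,μ,π}} T_π is a √γ-contraction in the norm ‖·‖_{f_{n,μ,π}} and X^⊤ D_{f_{n,μ,π}} X is positive definite (as holds when n exceeds the thresholds n₁(μ,π), n₂(μ,π) of Lemmas 3 and 6 uniformly over Λ_M × Λ_Π). Define g_{μ,π}(w) := X^⊤ D_{f_{n,μ,π}} (T_π(Xw) − Xw) and z_{μ,π}^η(w) := w + η g_{μ,π}(w), and let w_{n,μ,π} be the unique weight vector with Π_{f_{n,μ,π}} T_π (X w_{n,μ,π}) = X w_{n,μ,π}. Then there exists η₀ > 0 such that for every η ∈ (0, η₀) there is β_η ∈ (0,1) with ‖z_{μ,π}^η(w) − w_{n,μ,π}‖ ≤ β_η ‖w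 − w_{n,μ,π}‖ for all μ ∈ Λ_M, π ∈ Λ_Π and all w ∈ ℝ^K. -/
/-!
Write `e = w - w_{n,μ,π}`, `u = X e` and `f = f_{n,μ,π}`. By the normal equations of the
projection, `g_{μ,π}(w) = Xᵀ D_f (q - u)` with `q = Π_f T_π (X w) - X w_{n,μ,π}`, and the contraction
hypothesis gives `‖q‖_f ≤ √γ ‖u‖_f`. Hence `⟪e, g⟫ = ⟪u, q - u⟫_f ≤ -(1 - √γ) ‖u‖_f²` and
`‖g‖² ≤ 4 F ‖X‖_F² ‖u‖_f²` for any bound `F` on `f`, so for small `η` the step shrinks `‖e‖²` by the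
factor `1 - η (1 - √γ) c`, where `c ‖e‖² ≤ ‖u‖_f²`.

These constants are uniform over `Λ_M × Λ_Π`: `f ≤ (n + 1) Σ i` because `P_π` is stochastic, and
`f ≥ d_μ i`, where `d_μ` is bounded below uniformly on the compact set `Λ_M` (near any `μ` some
power of `P_μ` has all entries above a fixed `ε > 0`, and then so does the stationary `d_μ`); the
injectivity of `X` turns this into `c > 0`.
-/

open Matrix Finset

noncomputable section

/-- State-transition matrix `P_π(s,s') = Σ_a π(a|s) p(s'|s,a)` induced by a policy. -/
def Pmat {S A : Type} [Fintype S] [Fintype A] (p : S → A → S → ℝ) (π : S → A → ℝ) :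
    Matrix S S ℝ :=
  Matrix.of fun s s' => ∑ a, π s a * p s a s'

/-- The truncated weighting vector `f_{n,μ,π} := Σ_{j=0}^n γ^j (P_π^⊤)^j D_μ i`. -/
def fvec {S A : Type} [Fintype S] [DecidableEq S] [Fintype A] (γ : ℝ)
    (p : S → A → S → ℝ) (i : S → ℝ) (dstat : (S → A → ℝ) → S → ℝ) (n : ℕ)
    (μ π : S → A → ℝ) : S → ℝ :=
  fun s => ∑ j ∈ Finset.range (n + 1),
    γ ^ j * ((((Pmat p π)ᵀ) ^ j).mulVec fun s' => dstat μ s' * i s') s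

/-- Weighted squared seminorm `‖v‖_g² = Σ_s g(s) v(s)²`. -/
def wsq {S : Type} [Fintype S] (g v : S → ℝ) : ℝ := ∑ s, g s * (v s) ^ 2

/-- The Bellman operator `T_π v = r_π + γ P_π v`. -/
def bellman {S A : Type} [Fintype S] [Fintype A] (γ : ℝ) (p : S → A → S → ℝ)
    (r : S → A → ℝ) (π : S → A → ℝ) (v : S → ℝ) : S → ℝ :=
  fun s => (∑ a, π s a * r s a) + γ * (Pmat p π).mulVec v s

open Filter Topology

lemma exists_pos_forall_lt_of_finite {ι : Type*} [Finite ι] {h : ι → ℝ} (hpos : ∀ j, 0 < h j) :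
    ∃ ε > 0, ∀ j, ε < h j := by
  have hsmall : ∀ᶠ ε in 𝓝[>] (0 : ℝ), ∀ j, ε < h j :=
    nhdsWithin_le_nhds (eventually_all.2 fun j => eventually_lt_nhds (hpos j))
  obtain ⟨ε, hε, hεpos⟩ := (hsmall.and self_mem_nhdsWithin).exists
  exact ⟨ε, hεpos, hε⟩

theorem IsCompact.exists_pos_forall_le {Y ι : Type*} [TopologicalSpace Y] {L : Set Y}
    (hL : IsCompact L) {g : Y → ι → ℝ}
    (hloc : ∀ y ∈ L, ∃ ε > 0, ∀ᶠ z in 𝓝[L] y, ∀ j, ε ≤ g z j) :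
    ∃ ε > 0, ∀ y ∈ L, ∀ j, ε ≤ g y j := by
  refine hL.induction_on (p := fun t => ∃ ε > 0, ∀ y ∈ t, ∀ j, ε ≤ g y j)
    ⟨1, one_pos, by simp⟩ ?_ ?_ ?_
  · rintro s t hst ⟨ε, hε, ht⟩
    exact ⟨ε, hε, fun y hy => ht y (hst hy)⟩
  · rintro s t ⟨ε, hε, hs⟩ ⟨ε', hε', ht⟩
    refine ⟨min ε ε', lt_min hε hε', fun y hy j => ?_⟩
    rcases hy with hy | hy
    · exact (min_le_left _ _).trans (hs y hy j)
    · exact (min_le_right _ _).trans (ht y hy j)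
  · intro y hy
    obtain ⟨ε, hε, h⟩ := hloc y hy
    exact ⟨_, h, ε, hε, fun z hz => hz⟩

section Stationary

variable {S : Type*} [Fintype S] [DecidableEq S]

lemma vecMul_pow_eq_self {d : S → ℝ} {P : Matrix S S ℝ} (hd : d ᵥ* P = d) (m : ℕ) :
    d ᵥ* P ^ m = d := by
  induction m with
  | zero => simp
  | succ m ih => rw [pow_succ, ← vecMul_vecMul, ih, hd]

lemma le_of_vecMul_eq_self {d : S → ℝ} {P : Matrix S S ℝ} {m : ℕ} {ε : ℝ}
    (hd0 : ∀ s, 0 ≤ d s) (hd1 : ∑ s, d s = 1) (hd : d ᵥ* P = d)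
    (hε : ∀ s s', ε ≤ (P ^ m) s s') (s' : S) : ε ≤ d s' :=
  calc ε = ∑ s, d s * ε := by rw [← sum_mul, hd1, one_mul]
    _ ≤ ∑ s, d s * (P ^ m) s s' :=
        sum_le_sum fun s _ => mul_le_mul_of_nonneg_left (hε s s') (hd0 s)
    _ = d s' := congrFun (vecMul_pow_eq_self hd m) s'

variable {Y : Type*} [TopologicalSpace Y] {P : Y → Matrix S S ℝ} {L : Set Y} {d : Y → S → ℝ}

lemma exists_pos_eventually_le_of_vecMul_eq_self (hP : Continuous P)
    (hd : ∀ y ∈ L, (∀ s, 0 ≤ d y s) ∧ ∑ s, d y s = 1 ∧ d y ᵥ* P y = d y)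
    {y₀ : Y} {m : ℕ} (hm : ∀ s s', 0 < (P y₀ ^ m) s s') :
    ∃ ε > 0, ∀ᶠ y in 𝓝[L] y₀, ∀ s, ε ≤ d y s := by
  obtain ⟨ε, hε, hlt⟩ := exists_pos_forall_lt_of_finite (h := fun x : S × S => (P y₀ ^ m) x.1 x.2)
    fun x => hm x.1 x.2
  have hnear : ∀ᶠ y in 𝓝 y₀, ∀ x : S × S, ε < (P y ^ m) x.1 x.2 :=
    eventually_all.2 fun x =>
      ((hP.pow m).matrix_elem x.1 x.2).continuousAt.eventually (lt_mem_nhds (hlt x))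
  refine ⟨ε, hε, ?_⟩
  filter_upwards [nhdsWithin_le_nhds hnear, self_mem_nhdsWithin] with y hy hyL
  obtain ⟨hd0, hd1, hstat⟩ := hd y hyL
  exact le_of_vecMul_eq_self hd0 hd1 hstat fun s s' => (hy (s, s')).le

theorem IsCompact.exists_pos_le_of_vecMul_eq_self (hL : IsCompact L) (hP : Continuous P)
    (hd : ∀ y ∈ L, (∀ s, 0 ≤ d y s) ∧ ∑ s, d y s = 1 ∧ d y ᵥ* P y = d y)
    (hprim : ∀ y ∈ L, ∃ m, ∀ s s', 0 < (P y ^ m) s s') :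
    ∃ ε > 0, ∀ y ∈ L, ∀ s, ε ≤ d y s :=
  hL.exists_pos_forall_le fun y hy =>
    let ⟨_, hm⟩ := hprim y hy
    exists_pos_eventually_le_of_vecMul_eq_self hP hd hm

end Stationary

section Weighting

variable {S A : Type} [Fintype S] [Fintype A] {p : S → A → S → ℝ}

lemma continuous_Pmat : Continuous (Pmat (A := A) p) := by
  unfold Pmat; fun_prop

variable [DecidableEq S]

lemma Pmat_mem_rowStochastic (hp0 : ∀ s a s', 0 ≤ p s a s') (hp1 : ∀ s a, ∑ s', p s a s' = 1)
    {π : S → A → ℝ} (hπ0 : ∀ s a, 0 ≤ π s a) (hπ1 : ∀ s, ∑ a, π s a = 1) :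
    Pmat p π ∈ rowStochastic ℝ S := by
  refine mem_rowStochastic_iff_sum.2
    ⟨fun s s' => sum_nonneg fun a _ => mul_nonneg (hπ0 s a) (hp0 s a s'), fun s => ?_⟩
  simp only [Pmat, of_apply]
  rw [sum_comm]
  simp [← mul_sum, hp1, hπ1]

lemma transpose_mulVec_mem_Icc {M : Matrix S S ℝ} (hM : M ∈ rowStochastic ℝ S) {v : S → ℝ}
    (hv : ∀ s, 0 ≤ v s) (s : S) : (Mᵀ *ᵥ v) s ∈ Set.Icc 0 (∑ s', v s') := by
  rw [mulVec_transpose]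
  refine ⟨sum_nonneg fun s' _ => mul_nonneg (hv s') (nonneg_of_mem_rowStochastic hM),
    sum_le_sum fun s' _ => ?_⟩
  exact mul_le_of_le_one_right (hv s') (le_one_of_mem_rowStochastic hM)

variable {γ : ℝ} {i : S → ℝ} {dstat : (S → A → ℝ) → S → ℝ} {n : ℕ} {μ π : S → A → ℝ}

lemma fvec_eq_sum :
    fvec γ p i dstat n μ π = ∑ j ∈ range (n + 1),
      γ ^ j • ((Pmat p π ^ j)ᵀ *ᵥ fun s' => dstat μ s' * i s') := by
  ext s
  simp [fvec, transpose_pow, Finset.sum_apply]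

lemma mul_le_fvec (hγ : 0 ≤ γ) (hπ : Pmat p π ∈ rowStochastic ℝ S)
    (hdi : ∀ s, 0 ≤ dstat μ s * i s) (s : S) : dstat μ s * i s ≤ fvec γ p i dstat n μ π s := by
  rw [fvec_eq_sum, Finset.sum_apply]
  refine le_of_eq_of_le ?_ (single_le_sum (f := fun j => (γ ^ j • ((Pmat p π ^ j)ᵀ *ᵥ
      fun s' => dstat μ s' * i s')) s) (fun j _ => mul_nonneg (pow_nonneg hγ j)
      (transpose_mulVec_mem_Icc (pow_mem hπ j) hdi s).1) (mem_range.2 n.succ_pos))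
  simp

lemma fvec_le (hγ0 : 0 ≤ γ) (hγ1 : γ ≤ 1) (hπ : Pmat p π ∈ rowStochastic ℝ S)
    (hd0 : ∀ s, 0 ≤ dstat μ s) (hd1 : ∑ s, dstat μ s = 1) (hi : ∀ s, 0 ≤ i s) (s : S) :
    fvec γ p i dstat n μ π s ≤ (n + 1) * ∑ s', i s' := by
  have hdi : ∀ s', dstat μ s' * i s' ≤ i s' := fun s' =>
    mul_le_of_le_one_left (hi s') (hd1 ▸ single_le_sum (fun t _ => hd0 t) (mem_univ s'))
  rw [fvec_eq_sum, Finset.sum_apply]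
  calc _ ≤ ∑ _j ∈ range (n + 1), ∑ s', i s' := sum_le_sum fun j _ => by
        have hIcc := transpose_mulVec_mem_Icc (pow_mem hπ j)
          (fun s' => mul_nonneg (hd0 s') (hi s')) s
        rw [Pi.smul_apply, smul_eq_mul]
        exact (mul_le_of_le_one_left hIcc.1 (pow_le_one₀ hγ0 hγ1)).trans
          (hIcc.2.trans (sum_le_sum fun s' _ => hdi s'))
    _ = (n + 1) * ∑ s', i s' := by simp

lemma exists_pos_le_fvec {L : Set (S → A → ℝ)} (hL : IsCompact L) (hγ : 0 ≤ γ)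
    (hi : ∀ s, 0 < i s)
    (hd : ∀ μ ∈ L, (∀ s, 0 ≤ dstat μ s) ∧ ∑ s, dstat μ s = 1 ∧ dstat μ ᵥ* Pmat p μ = dstat μ)
    (hprim : ∀ μ ∈ L, ∃ m, ∀ s s', 0 < (Pmat p μ ^ m) s s') :
    ∃ b > 0, ∀ μ ∈ L, ∀ π, Pmat p π ∈ rowStochastic ℝ S → ∀ s,
      b ≤ fvec γ p i dstat n μ π s := by
  obtain ⟨ε, hε, hdε⟩ := hL.exists_pos_le_of_vecMul_eq_self continuous_Pmat hd hprim
  obtain ⟨a, ha, hia⟩ := exists_pos_forall_lt_of_finite hi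
  refine ⟨ε * a, mul_pos hε ha, fun μ hμ π hπ s => ?_⟩
  have hd0 := (hd μ hμ).1
  exact (mul_le_mul (hdε μ hμ s) (hia s).le ha.le (hd0 s)).trans
    (mul_le_fvec hγ hπ (fun s => mul_nonneg (hd0 s) (hi s).le) s)

end Weighting

section WeightedLeastSquares

variable {S : Type} {ι : Type*} [Fintype S] [Fintype ι]

def wdot (g u v : S → ℝ) : ℝ := ∑ s, g s * u s * v s

lemma wdot_self (g v : S → ℝ) : wdot g v v = wsq g v := by
  simp only [wdot, wsq, sq, mul_assoc]

lemma wdot_sub_right (g u v v' : S → ℝ) : wdot g u (v - v') = wdot g u v - wdot g u v' := by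
  simp only [wdot, Pi.sub_apply, mul_sub, sum_sub_distrib]

lemma wsq_nonneg {g : S → ℝ} (hg : ∀ s, 0 ≤ g s) (v : S → ℝ) : 0 ≤ wsq g v :=
  sum_nonneg fun s _ => mul_nonneg (hg s) (sq_nonneg _)

lemma wdot_le_sqrt_wsq_mul_sqrt_wsq {g : S → ℝ} (hg : ∀ s, 0 ≤ g s) (u v : S → ℝ) :
    wdot g u v ≤ √(wsq g u) * √(wsq g v) := by
  rw [← Real.sqrt_mul (wsq_nonneg hg u)]
  refine Real.le_sqrt_of_sq_le (sum_sq_le_sum_mul_sum_of_sq_le_mul _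
    (fun s _ => mul_nonneg (hg s) (sq_nonneg _)) (fun s _ => mul_nonneg (hg s) (sq_nonneg _))
    fun s _ => le_of_eq (by ring))

lemma wsq_sub_le {g : S → ℝ} (hg : ∀ s, 0 ≤ g s) (u v : S → ℝ) :
    wsq g (u - v) ≤ 2 * wsq g u + 2 * wsq g v := by
  simp only [wsq, mul_sum, ← sum_add_distrib, Pi.sub_apply]
  exact sum_le_sum fun s _ => by nlinarith [hg s, mul_nonneg (hg s) (sq_nonneg (u s + v s))]

lemma le_wsq_of_le {g : S → ℝ} {b : ℝ} (hb : ∀ s, b ≤ g s) (v : S → ℝ) :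
    b * ∑ s, v s ^ 2 ≤ wsq g v := by
  rw [mul_sum]
  exact sum_le_sum fun s _ => mul_le_mul_of_nonneg_right (hb s) (sq_nonneg _)

variable [DecidableEq S] (X : Matrix S ι ℝ)

lemma dotProduct_transpose_mul_diagonal_mulVec (g v : S → ℝ) (x : ι → ℝ) :
    x ⬝ᵥ (Xᵀ * diagonal g) *ᵥ v = wdot g (X *ᵥ x) v := by
  rw [← mulVec_mulVec, dotProduct_mulVec, vecMul_transpose, dotProduct_comm, dotProduct,
    wdot]
  simp only [mulVec_diagonal]
  exact sum_congr rfl fun s _ => by ring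

lemma sum_sq_transpose_mul_diagonal_mulVec_le {g : S → ℝ} {F : ℝ} (hg0 : ∀ s, 0 ≤ g s)
    (hgF : ∀ s, g s ≤ F) (v : S → ℝ) :
    ∑ k, ((Xᵀ * diagonal g) *ᵥ v) k ^ 2 ≤ F * (∑ s, ∑ k, X s k ^ 2) * wsq g v := by
  classical
  rw [sum_comm, mul_sum, sum_mul]
  refine sum_le_sum fun k _ => ?_
  have hcol : ((Xᵀ * diagonal g) *ᵥ v) k = wdot g (Xᵀ k) v := by
    simpa [mulVec_single, col] using dotProduct_transpose_mul_diagonal_mulVec X g v (Pi.single k 1)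
  calc ((Xᵀ * diagonal g) *ᵥ v) k ^ 2 ≤ wsq g (Xᵀ k) * wsq g v := by
        rw [hcol]
        exact sum_sq_le_sum_mul_sum_of_sq_le_mul _
          (fun s _ => mul_nonneg (hg0 s) (sq_nonneg _)) (fun s _ => mul_nonneg (hg0 s) (sq_nonneg _))
          fun s _ => le_of_eq (by ring)
    _ ≤ F * (∑ s, X s k ^ 2) * wsq g v := by
        gcongr
        · exact wsq_nonneg hg0 v
        · rw [mul_sum]
          exact sum_le_sum fun s _ => mul_le_mul_of_nonneg_right (hgF s) (sq_nonneg _)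

lemma transpose_mul_diagonal_mulVec_sub_eq_zero {g v Pv : S → ℝ} (hPv : ∃ w₀, Pv = X *ᵥ w₀)
    (hmin : ∀ w, wsq g (Pv - v) ≤ wsq g (X *ᵥ w - v)) :
    (Xᵀ * diagonal g) *ᵥ (Pv - v) = 0 := by
  obtain ⟨w₀, rfl⟩ := hPv
  have horth : ∀ x, wdot g (X *ᵥ x) (X *ᵥ w₀ - v) = 0 := by
    intro x
    have hquad : ∀ t : ℝ,
        0 ≤ wsq g (X *ᵥ x) * (t * t) + 2 * wdot g (X *ᵥ x) (X *ᵥ w₀ - v) * t + 0 := by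
      intro t
      have hexp : wsq g (X *ᵥ (w₀ + t • x) - v) = wsq g (X *ᵥ w₀ - v) +
          (wsq g (X *ᵥ x) * (t * t) + 2 * wdot g (X *ᵥ x) (X *ᵥ w₀ - v) * t) := by
        simp only [wsq, wdot, mulVec_add, mulVec_smul, Pi.add_apply, Pi.sub_apply,
          Pi.smul_apply, smul_eq_mul, mul_sum, ← sum_add_distrib, sum_mul]
        exact sum_congr rfl fun s _ => by ring
      linarith [hmin (w₀ + t • x)]
    have hdisc := discrim_le_zero hquad
    rw [discrim, mul_zero, sub_zero] at hdisc
    have hlin := pow_eq_zero_iff two_ne_zero |>.1 (le_antisymm hdisc (sq_nonneg _))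
    exact (mul_eq_zero.1 hlin).resolve_left two_ne_zero
  refine dotProduct_self_eq_zero.1 ?_
  rw [dotProduct_transpose_mul_diagonal_mulVec, horth]

end WeightedLeastSquares

lemma sum_sq_eq_norm_toLp_sq {ι : Type*} [Fintype ι] (x : ι → ℝ) :
    ∑ k, x k ^ 2 = ‖WithLp.toLp 2 x‖ ^ 2 := by
  simp [EuclideanSpace.norm_sq_eq]

lemma exists_pos_mul_sum_sq_le_sum_sq_mulVec {S ι : Type*} [Fintype S] [Fintype ι]
    [DecidableEq ι] {X : Matrix S ι ℝ} (hX : Function.Injective X.mulVec) :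
    ∃ κ > 0, ∀ x, κ * ∑ k, x k ^ 2 ≤ ∑ s, (X *ᵥ x) s ^ 2 := by
  obtain ⟨C, hC, hanti⟩ := (toLpLin 2 2 X).exists_antilipschitzWith <| by
    rw [LinearMap.ker_eq_bot]
    intro x y hxy
    exact WithLp.ofLp_injective 2 (hX (congrArg WithLp.ofLp hxy))
  refine ⟨1 / (C : ℝ) ^ 2, by positivity, fun x => ?_⟩
  have hle := hanti.le_mul_norm (map_zero _) (WithLp.toLp 2 x)
  rw [toLpLin_toLp, toLin'_apply] at hle
  rw [sum_sq_eq_norm_toLp_sq, sum_sq_eq_norm_toLp_sq, div_mul_eq_mul_div, one_mul,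
    div_le_iff₀ (by positivity)]
  nlinarith [norm_nonneg (WithLp.toLp 2 x)]

theorem norm_add_smul_sq_le {E : Type*} [NormedAddCommGroup E] [InnerProductSpace ℝ E]
    {e d : E} {U δ M c η : ℝ} (hinner : inner ℝ e d ≤ -(δ * U)) (hd : ‖d‖ ^ 2 ≤ M * U)
    (hc : c * ‖e‖ ^ 2 ≤ U) (hU : 0 ≤ U) (hδ : 0 ≤ δ) (hη : 0 ≤ η) (hηM : η * M ≤ δ) :
    ‖e + η • d‖ ^ 2 ≤ (1 - η * δ * c) * ‖e‖ ^ 2 := by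
  rw [norm_add_sq_real, inner_smul_right, norm_smul, mul_pow, Real.norm_eq_abs, sq_abs]
  nlinarith [mul_le_mul_of_nonneg_left hd (sq_nonneg η), mul_le_mul_of_nonneg_right hηM
    (mul_nonneg hη hU), mul_le_mul_of_nonneg_left hc (mul_nonneg hη hδ)]

theorem sum_sq_update_sub_le {S : Type} {ι : Type*} [Fintype S] [DecidableEq S] [Fintype ι]
    (X : Matrix S ι ℝ) {g Tv Pv : S → ℝ} {w w' : ι → ℝ} {F c γ η : ℝ}
    (hg0 : ∀ s, 0 ≤ g s) (hgF : ∀ s, g s ≤ F) (hF : 0 ≤ F)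
    (hc : ∀ x, c * ∑ k, x k ^ 2 ≤ wsq g (X *ᵥ x)) (hγ : γ ≤ 1)
    (horth : (Xᵀ * diagonal g) *ᵥ (Pv - Tv) = 0)
    (hcontr : √(wsq g (Pv - X *ᵥ w')) ≤ √γ * √(wsq g (X *ᵥ w - X *ᵥ w')))
    (hη : 0 ≤ η) (hηM : η * (4 * F * ∑ s, ∑ k, X s k ^ 2) ≤ 1 - √γ) :
    ∑ k, (w k + η * ((Xᵀ * diagonal g) *ᵥ (Tv - X *ᵥ w)) k - w' k) ^ 2 ≤
      (1 - η * (1 - √γ) * c) * ∑ k, (w k - w' k) ^ 2 := by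
  set u := X *ᵥ w - X *ᵥ w'
  set q := Pv - X *ᵥ w'
  set Δ := (Xᵀ * diagonal g) *ᵥ (Tv - X *ᵥ w)
  have hΔ : Δ = (Xᵀ * diagonal g) *ᵥ (q - u) := by
    rw [show q - u = (Pv - Tv) + (Tv - X *ᵥ w) by simp only [q, u]; abel, mulVec_add, horth,
      zero_add]
  have hU : 0 ≤ wsq g u := wsq_nonneg hg0 u
  have hsγ : √γ ≤ 1 := Real.sqrt_le_one.mpr hγ
  have hqu : wsq g q ≤ wsq g u := (Real.sqrt_le_sqrt_iff hU).1
    (hcontr.trans (mul_le_of_le_one_left (Real.sqrt_nonneg _) hsγ))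
  have hinner : inner ℝ (WithLp.toLp 2 (w - w')) (WithLp.toLp 2 Δ) ≤ -((1 - √γ) * wsq g u) := by
    rw [EuclideanSpace.inner_toLp_toLp, star_trivial, dotProduct_comm, hΔ,
      dotProduct_transpose_mul_diagonal_mulVec, mulVec_sub, wdot_sub_right, wdot_self]
    nlinarith [wdot_le_sqrt_wsq_mul_sqrt_wsq hg0 u q, Real.mul_self_sqrt hU,
      mul_le_mul_of_nonneg_left hcontr (Real.sqrt_nonneg (wsq g u))]
  have hnorm : ‖WithLp.toLp 2 Δ‖ ^ 2 ≤ 4 * F * (∑ s, ∑ k, X s k ^ 2) * wsq g u := by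
    rw [← sum_sq_eq_norm_toLp_sq, hΔ]
    refine (sum_sq_transpose_mul_diagonal_mulVec_le X hg0 hgF _).trans ?_
    have hFX : 0 ≤ F * ∑ s, ∑ k, X s k ^ 2 := by positivity
    nlinarith [mul_le_mul_of_nonneg_left (wsq_sub_le hg0 q u) hFX]
  have hlow : c * ‖WithLp.toLp 2 (w - w')‖ ^ 2 ≤ wsq g u := by
    simpa only [← sum_sq_eq_norm_toLp_sq, mulVec_sub] using hc (w - w')
  have hstep := norm_add_smul_sq_le hinner hnorm hlow hU (sub_nonneg.2 hsγ) hη hηM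
  have hupd : (fun k => w k + η * Δ k - w' k) = (w - w') + η • Δ := by
    ext k; simp only [Pi.add_apply, Pi.sub_apply, Pi.smul_apply, smul_eq_mul]; ring
  rw [sum_sq_eq_norm_toLp_sq, hupd, WithLp.toLp_add, WithLp.toLp_smul]
  refine hstep.trans_eq ?_
  rw [← sum_sq_eq_norm_toLp_sq]
  rfl

theorem exists_uniform_update_contraction {S : Type} {ι J : Type*} [Fintype S] [DecidableEq S]
    [Fintype ι] [DecidableEq ι] {X : Matrix S ι ℝ} (hX : Function.Injective X.mulVec)
    {γ b F : ℝ} (hγ : γ < 1) (hb : 0 < b) (hF : 0 ≤ F)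
    {g : J → S → ℝ} (hgb : ∀ j s, b ≤ g j s) (hgF : ∀ j s, g j s ≤ F)
    {T P : J → (ι → ℝ) → S → ℝ} {w' : J → ι → ℝ}
    (horth : ∀ j w, (Xᵀ * diagonal (g j)) *ᵥ (P j w - T j w) = 0)
    (hcontr : ∀ j w,
      √(wsq (g j) (P j w - X *ᵥ w' j)) ≤ √γ * √(wsq (g j) (X *ᵥ w - X *ᵥ w' j))) :
    ∃ η₀ > (0 : ℝ), ∀ η : ℝ, 0 < η → η < η₀ → ∃ β : ℝ, 0 < β ∧ β < 1 ∧ ∀ j w,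
      √(∑ k, (w k + η * ((Xᵀ * diagonal (g j)) *ᵥ (T j w - X *ᵥ w)) k - w' j k) ^ 2) ≤
        β * √(∑ k, (w k - w' j k) ^ 2) := by
  obtain ⟨κ, hκ, hXκ⟩ := exists_pos_mul_sum_sq_le_sum_sq_mulVec hX
  set M := 4 * F * ∑ s, ∑ k, X s k ^ 2
  set δ := 1 - √γ
  set c := b * κ
  have hM : 0 ≤ M := by positivity
  have hδ : 0 < δ := sub_pos.2 ((Real.sqrt_lt' one_pos).2 (by rwa [one_pow]))
  have hc : 0 < c := mul_pos hb hκ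
  have hlow : ∀ j x, c * ∑ k, x k ^ 2 ≤ wsq (g j) (X *ᵥ x) := fun j x =>
    calc c * ∑ k, x k ^ 2 = b * (κ * ∑ k, x k ^ 2) := mul_assoc _ _ _
      _ ≤ b * ∑ s, (X *ᵥ x) s ^ 2 := mul_le_mul_of_nonneg_left (hXκ x) hb.le
      _ ≤ wsq (g j) (X *ᵥ x) := le_wsq_of_le (hgb j) _
  refine ⟨δ / (M + δ * c), by positivity, fun η hη hηη₀ => ?_⟩
  have hη₀ : η * M + η * δ * c < δ := by
    rw [mul_assoc, ← mul_add]; exact (lt_div_iff₀ (by positivity)).1 hηη₀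
  have hηδc : 0 < η * δ * c := by positivity
  refine ⟨√(1 - η * δ * c), Real.sqrt_pos.2 (by nlinarith [Real.sqrt_nonneg γ]),
    (Real.sqrt_lt' one_pos).2 (by linarith), fun j w => ?_⟩
  have hstep := sum_sq_update_sub_le X (fun s => hb.le.trans (hgb j s)) (hgF j) hF (hlow j)
    hγ.le (horth j w) (hcontr j w) hη.le (by nlinarith)
  exact (Real.sqrt_le_sqrt hstep).trans_eq (Real.sqrt_mul' _ (sum_nonneg fun k _ => sq_nonneg _))

theorem uniform_update_contraction_general
    {S A : Type} [Fintype S] [DecidableEq S] [Fintype A] {K : ℕ}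
    (γ : ℝ) (hγ0 : 0 ≤ γ) (hγ1 : γ < 1)
    (p : S → A → S → ℝ) (hp0 : ∀ s a s', 0 ≤ p s a s') (hp1 : ∀ s a, ∑ s', p s a s' = 1)
    (r : S → A → ℝ)
    (i : S → ℝ) (hi : ∀ s, 0 < i s)
    (μw πw : (Fin K → ℝ) → S → A → ℝ)
    -- every behavior policy in the closure Λ_M is positive, a probability, ergodic
    (hLamM : ∀ μ ∈ closure (Set.range μw), (∀ s a, 0 < μ s a) ∧ (∀ s, ∑ a, μ s a = 1) ∧
      ∃ T : ℕ, ∀ s s', 0 < ((Pmat p μ) ^ (T + 1)) s s')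
    (hLamPi : ∀ π ∈ closure (Set.range πw), (∀ s a, 0 ≤ π s a) ∧ (∀ s, ∑ a, π s a = 1))
    -- stationary distributions of the behavior policies
    (dstat : (S → A → ℝ) → S → ℝ)
    (hdstat : ∀ μ ∈ closure (Set.range μw), (∀ s, 0 < dstat μ s) ∧ (∑ s, dstat μ s = 1) ∧
      ∀ s', ∑ s, dstat μ s * Pmat p μ s s' = dstat μ s')
    (n : ℕ)
    (X : Matrix S (Fin K) ℝ) (hX : Function.Injective X.mulVec)
    -- the `f_{n,μ,π}`-weighted projection onto the column space of `X`
    (Proj : (S → A → ℝ) → (S → A → ℝ) → (S → ℝ) → (S → ℝ))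
    (hProj : ∀ μ ∈ closure (Set.range μw), ∀ π ∈ closure (Set.range πw), ∀ v : S → ℝ,
      (∃ w : Fin K → ℝ, Proj μ π v = X.mulVec w) ∧
      ∀ w : Fin K → ℝ, wsq (fvec γ p i dstat n μ π) (Proj μ π v - v) ≤
        wsq (fvec γ p i dstat n μ π) (X.mulVec w - v))
    -- hypothesis: `Π_{f_{n,μ,π}} T_π` is a `√γ`-contraction in `‖·‖_{f_{n,μ,π}}`
    (hcontr : ∀ μ ∈ closure (Set.range μw), ∀ π ∈ closure (Set.range πw),
      ∀ v₁ v₂ : S → ℝ,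
        Real.sqrt (wsq (fvec γ p i dstat n μ π)
            (Proj μ π (bellman γ p r π v₁) - Proj μ π (bellman γ p r π v₂))) ≤
          Real.sqrt γ * Real.sqrt (wsq (fvec γ p i dstat n μ π) (v₁ - v₂)))
    -- `w_{n,μ,π}`: the unique fixed point of `Π_{f_{n,μ,π}} T_π` in the parameter space
    (wfix : (S → A → ℝ) → (S → A → ℝ) → (Fin K → ℝ))
    (hwfix : ∀ μ ∈ closure (Set.range μw), ∀ π ∈ closure (Set.range πw),
      Proj μ π (bellman γ p r π (X.mulVec (wfix μ π))) = X.mulVec (wfix μ π)) :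
    ∃ η₀ > (0 : ℝ), ∀ η : ℝ, 0 < η → η < η₀ →
      ∃ β : ℝ, 0 < β ∧ β < 1 ∧
        ∀ μ ∈ closure (Set.range μw), ∀ π ∈ closure (Set.range πw), ∀ w : Fin K → ℝ,
          Real.sqrt (∑ k, (w k +
              η * ((Xᵀ * Matrix.diagonal (fvec γ p i dstat n μ π)).mulVec
                (bellman γ p r π (X.mulVec w) - X.mulVec w)) k - wfix μ π k) ^ 2) ≤
            β * Real.sqrt (∑ k, (w k - wfix μ π k) ^ 2) := by
  set ΛM := closure (Set.range μw)
  set ΛP := closure (Set.range πw)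
  have hPπ : ∀ π ∈ ΛP, Pmat p π ∈ rowStochastic ℝ S := fun π hπ =>
    Pmat_mem_rowStochastic hp0 hp1 (hLamPi π hπ).1 (hLamPi π hπ).2
  have hd : ∀ μ ∈ ΛM, (∀ s, 0 ≤ dstat μ s) ∧ ∑ s, dstat μ s = 1 ∧
      dstat μ ᵥ* Pmat p μ = dstat μ := fun μ hμ =>
    ⟨fun s => ((hdstat μ hμ).1 s).le, (hdstat μ hμ).2.1, funext (hdstat μ hμ).2.2⟩
  have hΛM : IsCompact ΛM :=
    (isCompact_univ_pi fun _ => isCompact_stdSimplex ℝ A).of_isClosed_subset isClosed_closure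
      fun μ hμ s _ => ⟨fun a => ((hLamM μ hμ).1 s a).le, (hLamM μ hμ).2.1 s⟩
  obtain ⟨b, hb, hfb⟩ := exists_pos_le_fvec (n := n) hΛM hγ0 hi hd fun μ hμ =>
    let ⟨T, hT⟩ := (hLamM μ hμ).2.2; ⟨T + 1, hT⟩
  obtain ⟨η₀, hη₀, hcontract⟩ := exists_uniform_update_contraction (J := ΛM × ΛP) hX hγ1 hb
    (g := fun j => fvec γ p i dstat n j.1 j.2) (T := fun j w => bellman γ p r j.2 (X *ᵥ w))
    (w' := fun j => wfix j.1 j.2) (mul_nonneg (by positivity) (sum_nonneg fun s _ => (hi s).le))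
    (fun j => hfb j.1 j.1.2 j.2 (hPπ j.2 j.2.2))
    (fun j => fvec_le hγ0 hγ1.le (hPπ j.2 j.2.2) (hd j.1 j.1.2).1 (hd j.1 j.1.2).2.1
      fun s => (hi s).le)
    (fun j w => transpose_mul_diagonal_mulVec_sub_eq_zero X
      (hProj j.1 j.1.2 j.2 j.2.2 _).1 (hProj j.1 j.1.2 j.2 j.2.2 _).2)
    fun j w => by
      have h := hcontr j.1 j.1.2 j.2 j.2.2 (X *ᵥ w) (X *ᵥ wfix j.1 j.2)
      rwa [hwfix j.1 j.1.2 j.2 j.2.2] at h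
  refine ⟨η₀, hη₀, fun η hη hηη₀ => ?_⟩
  obtain ⟨β, hβ0, hβ1, hβ⟩ := hcontract η hη hηη₀
  exact ⟨β, hβ0, hβ1, fun μ hμ π hπ => hβ (⟨μ, hμ⟩, ⟨π, hπ⟩)⟩

/-- uniform contraction of the update map
`z_{μ,π}^η(w) = w + η g_{μ,π}(w)` towards the fixed point `w_{n,μ,π}`,
for all small enough `η > 0`, uniformly over `(μ,π) ∈ Λ_M × Λ_Π`. -/
theorem uniform_update_contraction
    {S A : Type} [Fintype S] [DecidableEq S] [Fintype A] {K : ℕ}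
    (γ : ℝ) (hγ0 : 0 ≤ γ) (hγ1 : γ < 1)
    (p : S → A → S → ℝ) (hp0 : ∀ s a s', 0 ≤ p s a s') (hp1 : ∀ s a, ∑ s', p s a s' = 1)
    (r : S → A → ℝ)
    (i : S → ℝ) (hi : ∀ s, 0 < i s)
    (μw πw : (Fin K → ℝ) → S → A → ℝ)
    (hμcont : Continuous μw) (hπcont : Continuous πw)
    -- every behavior policy in the closure Λ_M is positive, a probability, ergodic
    (hLamM : ∀ μ ∈ closure (Set.range μw), (∀ s a, 0 < μ s a) ∧ (∀ s, ∑ a, μ s a = 1) ∧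
      ∃ T : ℕ, ∀ s s', 0 < ((Pmat p μ) ^ (T + 1)) s s')
    (hLamPi : ∀ π ∈ closure (Set.range πw), (∀ s a, 0 ≤ π s a) ∧ (∀ s, ∑ a, π s a = 1))
    -- stationary distributions of the behavior policies
    (dstat : (S → A → ℝ) → S → ℝ)
    (hdstat : ∀ μ ∈ closure (Set.range μw), (∀ s, 0 < dstat μ s) ∧ (∑ s, dstat μ s = 1) ∧
      ∀ s', ∑ s, dstat μ s * Pmat p μ s s' = dstat μ s')
    (n : ℕ)
    (X : Matrix S (Fin K) ℝ) (hX : Function.Injective X.mulVec)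
    -- the `f_{n,μ,π}`-weighted projection onto the column space of `X`
    (Proj : (S → A → ℝ) → (S → A → ℝ) → (S → ℝ) → (S → ℝ))
    (hProj : ∀ μ ∈ closure (Set.range μw), ∀ π ∈ closure (Set.range πw), ∀ v : S → ℝ,
      (∃ w : Fin K → ℝ, Proj μ π v = X.mulVec w) ∧
      ∀ w : Fin K → ℝ, wsq (fvec γ p i dstat n μ π) (Proj μ π v - v) ≤
        wsq (fvec γ p i dstat n μ π) (X.mulVec w - v))
    -- hypothesis: `Π_{f_{n,μ,π}} T_π` is a `√γ`-contraction in `‖·‖_{f_{n,μ,π}}`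
    (hcontr : ∀ μ ∈ closure (Set.range μw), ∀ π ∈ closure (Set.range πw),
      ∀ v₁ v₂ : S → ℝ,
        Real.sqrt (wsq (fvec γ p i dstat n μ π)
            (Proj μ π (bellman γ p r π v₁) - Proj μ π (bellman γ p r π v₂))) ≤
          Real.sqrt γ * Real.sqrt (wsq (fvec γ p i dstat n μ π) (v₁ - v₂)))
    -- hypothesis: `Xᵀ D_{f_{n,μ,π}} X` is positive definite
    (hpd : ∀ μ ∈ closure (Set.range μw), ∀ π ∈ closure (Set.range πw),
      ∀ w : Fin K → ℝ, w ≠ 0 →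
        0 < ∑ k, w k * ((Xᵀ * Matrix.diagonal (fvec γ p i dstat n μ π) * X).mulVec w) k)
    -- `w_{n,μ,π}`: the unique fixed point of `Π_{f_{n,μ,π}} T_π` in the parameter space
    (wfix : (S → A → ℝ) → (S → A → ℝ) → (Fin K → ℝ))
    (hwfix : ∀ μ ∈ closure (Set.range μw), ∀ π ∈ closure (Set.range πw),
      Proj μ π (bellman γ p r π (X.mulVec (wfix μ π))) = X.mulVec (wfix μ π))
    (huniq : ∀ μ ∈ closure (Set.range μw), ∀ π ∈ closure (Set.range πw),
      ∀ w : Fin K → ℝ, Proj μ π (bellman γ p r π (X.mulVec w)) = X.mulVec w →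
        w = wfix μ π) :
    ∃ η₀ > (0 : ℝ), ∀ η : ℝ, 0 < η → η < η₀ →
      ∃ β : ℝ, 0 < β ∧ β < 1 ∧
        ∀ μ ∈ closure (Set.range μw), ∀ π ∈ closure (Set.range πw), ∀ w : Fin K → ℝ,
          Real.sqrt (∑ k, (w k +
              η * ((Xᵀ * Matrix.diagonal (fvec γ p i dstat n μ π)).mulVec
                (bellman γ p r π (X.mulVec w) - X.mulVec w)) k - wfix μ π k) ^ 2) ≤
            β * Real.sqrt (∑ k, (w k - wfix μ π k) ^ 2) :=
  uniform_update_contraction_general γ hγ0 hγ1 p hp0 hp1 r i hi μw πw hLamM hLamPi dstat hdstat n X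
    hX Proj hProj hcontr wfix hwfix

end
end
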